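/- arXiv:0912.5119 — 7 statements merged into one kernel-verified Lean document; each statement's English description precedes it below -/
import Mathlib

section
/- Let n ≥ 0 and r ≥ 1 be integers, let q be real with 0 < q < 1, and let x be a real number. Then for every real z with 0 ≤ z < 1 the series Σ_{(m_1,…,m_r)∈ℕ^r} (-1)^{m_1+⋯+m_r} z^{m_1+⋯+m_r} [m_1+⋯+m_r+x]_q^n and Σ_{m=0}^∞ C(m+r-1, m) (-z)^m [m+x]_q^n converge absolutely and are equal; moreover, as z → 1⁻, 2^r times their common value converges to the r-th order q-Euler polynomial E_{n,q}^{(r)}(x) = (2^r/(1-q)^n) Σ_{l=0}^n C(n,l) (-1)^l q^{l x} / (1+q^l)^r. -/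
/-!
Expanding `[S + x]_q^n = (1 - q^x q^S)^n / (1 - q)^n` binomially writes it as a finite combination
`∑ₗ cₗ (q^l)^S`. Both series then become combinations of the series in `t = -z q^l` given by
`∑_{m ∈ ℕ^r} t^{m₁+⋯+mᵣ} = (1 - t)^{-r} = ∑ₘ C(m+r-1, m) t^m`, so both equal
`∑ₗ cₗ / (1 + z q^l)^r`. This is a rational function of `z`, continuous at `z = 1`, and its value
there is `E_{n,q}^{(r)}(x) / 2^r`.
-/

open Finset Filter

/-- The `q`-analogue `[y]_q = (1 - q^y)/(1 - q)` (real power). -/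
noncomputable def qnum (q y : ℝ) : ℝ := (1 - q ^ y) / (1 - q)

section GeometricPi

variable {𝕜 : Type*} [NormedField 𝕜] [CompleteSpace 𝕜]

theorem summable_norm_and_hasSum_prod_pi_fin {ι : Type*} {f : ι → 𝕜}
    (hf : Summable fun k => ‖f k‖) (r : ℕ) :
    (Summable fun m : Fin r → ι => ‖∏ i, f (m i)‖) ∧
      HasSum (fun m : Fin r → ι => ∏ i, f (m i)) ((∑' k, f k) ^ r) := by
  induction r with
  | zero => exact ⟨.of_finite, by simp⟩
  | succ r ih =>
    obtain ⟨ih_norm, ih_sum⟩ := ih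
    let e := Fin.consEquiv (fun _ : Fin (r + 1) => ι)
    have he : ∀ p : ι × (Fin r → ι), ∏ i, f (e p i) = f p.1 * ∏ i, f (p.2 i) := fun p => by
      simp [e, Fin.consEquiv, Fin.prod_univ_succ]
    have h_norm : Summable fun p : ι × (Fin r → ι) => ‖f p.1‖ * ‖∏ i, f (p.2 i)‖ :=
      hf.mul_of_nonneg ih_norm (fun _ => norm_nonneg _) (fun _ => norm_nonneg _)
    have h_tsum : HasSum f (∑' k, f k) := hf.of_norm.hasSum
    have h_summable := summable_mul_of_summable_norm hf ih_norm
    have h_prod := h_tsum.mul ih_sum h_summable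
    refine ⟨?_, ?_⟩
    · rw [← e.summable_iff]
      simpa only [Function.comp_def, he, norm_mul] using h_norm
    · rw [← e.hasSum_iff, pow_succ']
      simpa only [Function.comp_def, he] using h_prod

theorem hasSum_pow_sum_pi_fin (r : ℕ) {t : 𝕜} (ht : ‖t‖ < 1) :
    HasSum (fun m : Fin r → ℕ => t ^ ∑ i, m i) ((1 - t)⁻¹ ^ r) := by
  have h := (summable_norm_and_hasSum_prod_pi_fin (f := (t ^ ·))
    (summable_norm_geometric_of_norm_lt_one ht) r).2
  simpa only [prod_pow_eq_pow_sum, tsum_geometric_of_norm_lt_one ht] using h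

end GeometricPi

theorem hasSum_add_sub_one_choose_mul_geometric {𝕜 : Type*} [NormedField 𝕜] (r : ℕ) {t : 𝕜}
    (ht : ‖t‖ < 1) :
    HasSum (fun m : ℕ => ((m + r - 1).choose m : 𝕜) * t ^ m) ((1 - t)⁻¹ ^ r) := by
  cases r with
  | zero =>
    have h_single : ∀ m ≠ 0, ((m + 0 - 1).choose m : 𝕜) * t ^ m = 0 := fun m hm => by
      rw [Nat.choose_eq_zero_of_lt (by omega), Nat.cast_zero, zero_mul]
    simpa using hasSum_single 0 h_single
  | succ k =>
    simpa [Nat.choose_symm_add, one_div, inv_pow] using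
      hasSum_choose_mul_geometric_of_norm_lt_one k ht

noncomputable def qEulerCoeff (q x : ℝ) (n l : ℕ) : ℝ :=
  (n.choose l : ℝ) * (-1) ^ l * q ^ ((l : ℝ) * x) / (1 - q) ^ n

noncomputable def qEulerAbelSum (q x : ℝ) (n r : ℕ) (z : ℝ) : ℝ :=
  ∑ l ∈ range (n + 1), qEulerCoeff q x n l / (1 + z * q ^ l) ^ r

lemma rpow_natCast_add_pow {q : ℝ} (hq : 0 < q) (S : ℕ) (x : ℝ) (l : ℕ) :
    (q ^ ((S : ℝ) + x)) ^ l = q ^ ((l : ℝ) * x) * (q ^ l) ^ S := by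
  rw [Real.rpow_add hq, Real.rpow_natCast, mul_pow, mul_comm (l : ℝ),
    Real.rpow_mul_natCast hq.le, pow_right_comm, mul_comm]

lemma qnum_natCast_add_pow {q : ℝ} (hq : 0 < q) (n S : ℕ) (x : ℝ) :
    qnum q ((S : ℝ) + x) ^ n = ∑ l ∈ range (n + 1), qEulerCoeff q x n l * (q ^ l) ^ S := by
  rw [qnum, div_pow, sub_eq_neg_add, add_pow, sum_div]
  refine sum_congr rfl fun l _ => ?_
  rw [qEulerCoeff, neg_pow, rpow_natCast_add_pow hq]
  ring

lemma neg_pow_mul_qnum_pow {q : ℝ} (hq : 0 < q) (n S : ℕ) (x z : ℝ) :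
    (-z) ^ S * qnum q ((S : ℝ) + x) ^ n =
      ∑ l ∈ range (n + 1), qEulerCoeff q x n l * (-z * q ^ l) ^ S := by
  rw [qnum_natCast_add_pow hq, mul_sum]
  refine sum_congr rfl fun l _ => ?_
  ring

theorem hasSum_mul_neg_pow_mul_qnum_pow {ι : Type*} (w : ι → ℝ) (d : ι → ℕ) (r : ℕ)
    (hw : ∀ t : ℝ, |t| < 1 → HasSum (fun i => w i * t ^ d i) ((1 - t)⁻¹ ^ r))
    {q : ℝ} (hq0 : 0 < q) (hq1 : q ≤ 1) (n : ℕ) (x : ℝ) {z : ℝ} (hz : |z| < 1) :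
    HasSum (fun i => w i * (-z) ^ d i * qnum q ((d i : ℝ) + x) ^ n)
      (qEulerAbelSum q x n r z) := by
  have h_ratio : ∀ l : ℕ, |-z * q ^ l| < 1 := fun l => by
    rw [abs_mul, abs_neg, abs_of_pos (pow_pos hq0 l)]
    exact lt_of_le_of_lt (mul_le_of_le_one_right (abs_nonneg z) (pow_le_one₀ hq0.le hq1)) hz
  have h_terms := hasSum_sum fun l (_ : l ∈ range (n + 1)) =>
    (hw _ (h_ratio l)).mul_left (qEulerCoeff q x n l)
  have h_fun : (fun i => w i * (-z) ^ d i * qnum q ((d i : ℝ) + x) ^ n) =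
      fun i => ∑ l ∈ range (n + 1), qEulerCoeff q x n l * (w i * (-z * q ^ l) ^ d i) := by
    funext i
    rw [mul_assoc, neg_pow_mul_qnum_pow hq0, mul_sum]
    refine sum_congr rfl fun l _ => ?_
    ring
  have h_val : qEulerAbelSum q x n r z =
      ∑ l ∈ range (n + 1), qEulerCoeff q x n l * (1 - -z * q ^ l)⁻¹ ^ r := by
    refine sum_congr rfl fun l _ => ?_
    rw [neg_mul, sub_neg_eq_add, inv_pow, div_eq_mul_inv]
  rw [h_fun, h_val]
  exact h_terms

lemma continuousAt_qEulerAbelSum {q : ℝ} (hq : 0 < q) (x : ℝ) (n r : ℕ) {z : ℝ} (hz : 0 ≤ z) :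
    ContinuousAt (qEulerAbelSum q x n r) z := by
  unfold qEulerAbelSum
  fun_prop (disch := positivity)

lemma two_pow_mul_qEulerAbelSum_one (q x : ℝ) (n r : ℕ) :
    2 ^ r * qEulerAbelSum q x n r 1 = 2 ^ r / (1 - q) ^ n *
        ∑ l ∈ range (n + 1),
          (n.choose l : ℝ) * (-1) ^ l * q ^ ((l : ℝ) * x) / (1 + q ^ (l : ℝ)) ^ r := by
  rw [qEulerAbelSum, mul_sum, mul_sum]
  refine sum_congr rfl fun l _ => ?_
  rw [qEulerCoeff, Real.rpow_natCast, one_mul]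
  ring

theorem stmt_0_general (n r : ℕ) (q : ℝ) (hq0 : 0 < q) (hq1 : q < 1) (x : ℝ) :
    (∀ z : ℝ, 0 ≤ z → z < 1 →
      Summable (fun m : Fin r → ℕ =>
        |(-1 : ℝ) ^ (∑ i, m i) * z ^ (∑ i, m i) * qnum q ((↑(∑ i, m i) : ℝ) + x) ^ n|) ∧
      Summable (fun m : ℕ =>
        |((m + r - 1).choose m : ℝ) * (-z) ^ m * qnum q ((m : ℝ) + x) ^ n|) ∧
      (∑' m : Fin r → ℕ,
          (-1 : ℝ) ^ (∑ i, m i) * z ^ (∑ i, m i) * qnum q ((↑(∑ i, m i) : ℝ) + x) ^ n) =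
        ∑' m : ℕ, ((m + r - 1).choose m : ℝ) * (-z) ^ m * qnum q ((m : ℝ) + x) ^ n) ∧
    Tendsto (fun z : ℝ => (2 : ℝ) ^ r *
        ∑' m : Fin r → ℕ,
          (-1 : ℝ) ^ (∑ i, m i) * z ^ (∑ i, m i) * qnum q ((↑(∑ i, m i) : ℝ) + x) ^ n)
      (nhdsWithin 1 (Set.Iio 1))
      (nhds ((2 : ℝ) ^ r / (1 - q) ^ n *
        ∑ l ∈ range (n + 1),
          (n.choose l : ℝ) * (-1) ^ l * q ^ ((l : ℝ) * x) / (1 + q ^ (l : ℝ)) ^ r)) := by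
  have h_pi : ∀ z : ℝ, |z| < 1 → HasSum (fun m : Fin r → ℕ =>
      (-1 : ℝ) ^ (∑ i, m i) * z ^ (∑ i, m i) * qnum q ((↑(∑ i, m i) : ℝ) + x) ^ n)
      (qEulerAbelSum q x n r z) := fun z hz => by
    simpa only [one_mul, neg_pow z] using
      hasSum_mul_neg_pow_mul_qnum_pow (fun _ => 1) (fun m : Fin r → ℕ => ∑ i, m i) r
        (fun t ht => by simpa only [one_mul] using hasSum_pow_sum_pi_fin r (t := t) ht)
        hq0 hq1.le n x hz
  have h_choose : ∀ z : ℝ, |z| < 1 → HasSum (fun m : ℕ =>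
      ((m + r - 1).choose m : ℝ) * (-z) ^ m * qnum q ((m : ℝ) + x) ^ n)
      (qEulerAbelSum q x n r z) := fun z hz =>
    hasSum_mul_neg_pow_mul_qnum_pow (fun m => ((m + r - 1).choose m : ℝ)) (fun m => m) r
      (fun t ht => hasSum_add_sub_one_choose_mul_geometric r ht) hq0 hq1.le n x hz
  refine ⟨fun z hz0 hz1 => ?_, ?_⟩
  · have hz : |z| < 1 := abs_lt.2 ⟨by linarith, hz1⟩
    exact ⟨(h_pi z hz).summable.abs, (h_choose z hz).summable.abs,
      (h_pi z hz).tsum_eq.trans (h_choose z hz).tsum_eq.symm⟩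
  · rw [← two_pow_mul_qEulerAbelSum_one]
    refine (((continuousAt_qEulerAbelSum hq0 x n r zero_le_one).tendsto.mono_left
      nhdsWithin_le_nhds).const_mul _).congr' ?_
    filter_upwards [Ioo_mem_nhdsLT (show (-1 : ℝ) < 1 by norm_num)] with z hz
    rw [(h_pi z (abs_lt.2 hz)).tsum_eq]

theorem stmt_0 (n r : ℕ) (hr : 1 ≤ r) (q : ℝ) (hq0 : 0 < q) (hq1 : q < 1) (x : ℝ) :
    (∀ z : ℝ, 0 ≤ z → z < 1 →
      Summable (fun m : Fin r → ℕ =>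
        |(-1 : ℝ) ^ (∑ i, m i) * z ^ (∑ i, m i) * qnum q ((↑(∑ i, m i) : ℝ) + x) ^ n|) ∧
      Summable (fun m : ℕ =>
        |((m + r - 1).choose m : ℝ) * (-z) ^ m * qnum q ((m : ℝ) + x) ^ n|) ∧
      (∑' m : Fin r → ℕ,
          (-1 : ℝ) ^ (∑ i, m i) * z ^ (∑ i, m i) * qnum q ((↑(∑ i, m i) : ℝ) + x) ^ n) =
        ∑' m : ℕ, ((m + r - 1).choose m : ℝ) * (-z) ^ m * qnum q ((m : ℝ) + x) ^ n) ∧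
    Tendsto (fun z : ℝ => (2 : ℝ) ^ r *
        ∑' m : Fin r → ℕ,
          (-1 : ℝ) ^ (∑ i, m i) * z ^ (∑ i, m i) * qnum q ((↑(∑ i, m i) : ℝ) + x) ^ n)
      (nhdsWithin 1 (Set.Iio 1))
      (nhds ((2 : ℝ) ^ r / (1 - q) ^ n *
        ∑ l ∈ range (n + 1),
          (n.choose l : ℝ) * (-1) ^ l * q ^ ((l : ℝ) * x) / (1 + q ^ (l : ℝ)) ^ r)) :=
  stmt_0_general n r q hq0 hq1 x
end

section
/- Let f be an odd positive integer, χ a Dirichlet character modulo f (viewed as a function on ℕ), n ≥ 0 and r ≥ 1 integers, q real with 0 < q < 1, and x real. Then the following three quantities are equal, with both Abel limits existing: (i) (2^r/(1-q)^n) Σ_{l=0}^n C(n,l) q^{lx} (-1)^l Σ_{(a_1,…,a_r)∈{0,…,f-1}^r} (∏_{j=1}^r χ(a_j)) (-q^l)^{a_1+⋯+a_r} / (1+q^{lf})^r; (ii) lim_{z→1⁻} 2^r Σ_{m=0}^∞ C(m+r-1,m) (-z)^m Σ_{(a_1,…,a_r)∈{0,…,f-1}^r} (∏_{j=1}^r χ(a_j))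 (-1)^{a_1+⋯+a_r} [a_1+⋯+a_r + x + m f]_q^n; (iii) lim_{z→1⁻} 2^r Σ_{(m_1,…,m_r)∈ℕ^r} (∏_{j=1}^r χ(m_j)) (-1)^{m_1+⋯+m_r} z^{m_1+⋯+m_r} [x + m_1+⋯+m_r]_q^n. -/
/-!
Expanding `(1 - q^y)^n` binomially turns `[y + k]_q^n` into a fixed linear combination, over
`l = 0, …, n`, of the geometric terms `q^{l k}`. Both Abel sums therefore split into `n + 1`
power series in `z`: a binomial series `∑ C(m+r-1, m) (-z q^{lf})^m = (1 + z q^{lf})^{-r}` for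
the first, and the `r`-th power of
`∑ χ(k) (-z q^l)^k = (∑_{a<f} χ(a) (-z q^l)^a) / (1 + z^f q^{lf})`
(by `f`-periodicity, and since `f` is odd) for the second. Both are continuous at `z = 1`, where
they agree.
-/

open Finset Filter

section GeneratingFunctions

variable {𝕜 : Type*} [NormedField 𝕜]

theorem hasSum_choose_mul_pow {t : 𝕜} (ht : ‖t‖ < 1) (r : ℕ) :
    HasSum (fun m : ℕ => ((m + r - 1).choose m : 𝕜) * t ^ m) ((1 - t) ^ r)⁻¹ := by
  rcases r with _ | r
  -- for `r = 0` the truncated subtraction makes every coefficient with `m ≥ 1` vanish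
  · convert hasSum_ite_eq 0 (1 : 𝕜) using 1
    · funext m
      rcases m with _ | m <;> simp
    · simp
  · convert hasSum_choose_mul_geometric_of_norm_lt_one r ht using 2 with m
    · rw [← add_assoc, Nat.add_sub_cancel, Nat.choose_symm_add]
    · rw [one_div]

theorem summable_norm_pi_fin_prod {g : ℕ → 𝕜} (hg : Summable fun k => ‖g k‖) (r : ℕ) :
    Summable fun m : Fin r → ℕ => ‖∏ j, g (m j)‖ := by
  induction r with
  | zero => exact Summable.of_finite
  | succ r ih =>
    refine ((Fin.consEquiv fun _ => ℕ).symm.summable_iff.mpr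
      (hg.mul_of_nonneg ih (fun _ => norm_nonneg _) (fun _ => norm_nonneg _))).congr fun m => ?_
    simp [Fin.consEquiv, Fin.prod_univ_succ, Fin.tail]

variable [CompleteSpace 𝕜]

theorem Function.Periodic.hasSum_mul_pow {f : ℕ} [NeZero f] {c : ℕ → 𝕜}
    (hc : Function.Periodic c f) {w : 𝕜} (hw : ‖w‖ < 1) :
    HasSum (fun k => c k * w ^ k) ((∑ a : Fin f, c a * w ^ (a : ℕ)) / (1 - w ^ f)) := by
  have hwf : ‖w ^ f‖ < 1 := by
    rw [norm_pow]
    exact pow_lt_one₀ (norm_nonneg w) hw (NeZero.ne f)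
  have hgeom : HasSum (fun k : ℕ => (w ^ f) ^ k) (1 - w ^ f)⁻¹ :=
    hasSum_geometric_of_norm_lt_one hwf
  have hfin := hasSum_fintype fun a : Fin f => c a * w ^ (a : ℕ)
  have hprod := HasSum.mul (f := fun k : ℕ => (w ^ f) ^ k)
    (g := fun a : Fin f => c a * w ^ (a : ℕ)) hgeom hfin <|
      summable_mul_of_summable_norm (f := fun k : ℕ => (w ^ f) ^ k)
      (g := fun a : Fin f => c a * w ^ (a : ℕ)) (summable_norm_geometric_of_norm_lt_one hwf)
      Summable.of_finite
  rw [div_eq_inv_mul]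
  refine ((Nat.divModEquiv f).hasSum_iff.mpr hprod).congr_fun fun k => ?_
  simp only [Function.comp, Nat.divModEquiv_apply, Fin.val_ofNat]
  rw [hc.map_mod_nat, ← pow_mul, mul_left_comm, ← pow_add, Nat.div_add_mod]

theorem hasSum_pi_fin_prod {g : ℕ → 𝕜} (hg : Summable fun k => ‖g k‖) (r : ℕ) :
    HasSum (fun m : Fin r → ℕ => ∏ j, g (m j)) ((∑' k, g k) ^ r) := by
  induction r with
  | zero => simp
  | succ r ih =>
    have hprod := HasSum.mul (f := g) (g := fun m : Fin r → ℕ => ∏ j, g (m j))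
      hg.of_norm.hasSum ih <| summable_mul_of_summable_norm (f := g)
        (g := fun m : Fin r → ℕ => ∏ j, g (m j)) hg (summable_norm_pi_fin_prod hg r)
    rw [pow_succ']
    refine ((Fin.consEquiv fun _ => ℕ).symm.hasSum_iff.mpr hprod).congr_fun fun m => ?_
    simp [Fin.consEquiv, Fin.prod_univ_succ, Fin.tail]

theorem Function.Periodic.hasSum_pi_fin_prod_mul_pow {f : ℕ} [NeZero f] {c : ℕ → 𝕜}
    (hc : Function.Periodic c f) {w : 𝕜} (hw : ‖w‖ < 1) (r : ℕ) :
    HasSum (fun m : Fin r → ℕ => ∏ j, c (m j) * w ^ m j)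
      (((∑ a : Fin f, c a * w ^ (a : ℕ)) / (1 - w ^ f)) ^ r) := by
  have hnorm : Summable fun k => ‖c k * w ^ k‖ := by
    simpa only [norm_mul, norm_pow] using
      (Function.Periodic.hasSum_mul_pow (c := fun k => ‖c k‖) (hc.comp norm)
        (w := ‖w‖) (by rwa [norm_norm])).summable
  rw [← (hc.hasSum_mul_pow hw).tsum_eq]
  exact hasSum_pi_fin_prod hnorm r

end GeneratingFunctions

theorem sum_fin_mul_pow_pow {R : Type*} [CommSemiring R] (c : ℕ → R) (w : R) (f r : ℕ) :
    (∑ a : Fin f, c a * w ^ (a : ℕ)) ^ r =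
      ∑ a : Fin r → Fin f, (∏ j, c (a j)) * w ^ ∑ j, (a j : ℕ) := by
  rw [Fintype.sum_pow]
  simp only [prod_mul_distrib, prod_pow_eq_pow_sum]

section QExpansion

variable {q : ℝ}

/-- `[x + k]_q^n = qnumPowSum n q x (fun l ↦ q^{lk})`: the binomial expansion of
`(1 - q^{x+k})^n`, with the dependence on `k` left as a parameter `G`. -/
noncomputable def qnumPowSum (n : ℕ) (q x : ℝ) (G : ℕ → ℂ) : ℂ :=
  ((1 : ℂ) - q)⁻¹ ^ n *
    ∑ l ∈ range (n + 1), (n.choose l : ℂ) * (-1) ^ l * ((q ^ ((l : ℝ) * x) : ℝ) : ℂ) * G l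

theorem ofReal_qnum_add_natCast_pow (hq : 0 < q) (n k : ℕ) (x : ℝ) :
    ((qnum q (x + k) ^ n : ℝ) : ℂ) = qnumPowSum n q x fun l => ((q : ℂ) ^ l) ^ k := by
  have hpow : ∀ l : ℕ, (q ^ (x + k)) ^ l = q ^ ((l : ℝ) * x) * (q ^ l) ^ k := by
    intro l
    rw [← Real.rpow_natCast, ← Real.rpow_mul hq.le,
      show (x + k) * l = l * x + ((l * k : ℕ) : ℝ) by push_cast; ring,
      Real.rpow_add hq, Real.rpow_natCast, pow_mul]
  rw [qnumPowSum, qnum, div_pow, sub_eq_add_neg, add_comm, add_pow]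
  push_cast
  rw [div_eq_inv_mul, ← inv_pow]
  congr 1
  refine sum_congr rfl fun l _ => ?_
  rw [neg_pow, ← Complex.ofReal_pow, hpow]
  push_cast
  ring

theorem qnumPowSum_const_mul (n : ℕ) (x : ℝ) (a : ℂ) (G : ℕ → ℂ) :
    a * qnumPowSum n q x G = qnumPowSum n q x fun l => a * G l := by
  simp only [qnumPowSum, mul_sum]
  exact sum_congr rfl fun _ _ => by ring

theorem sum_qnumPowSum {ι : Type*} (s : Finset ι) (n : ℕ) (x : ℝ) (G : ι → ℕ → ℂ) :
    ∑ i ∈ s, qnumPowSum n q x (G i) = qnumPowSum n q x fun l => ∑ i ∈ s, G i l := by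
  simp only [qnumPowSum, ← mul_sum]
  rw [sum_comm]
  simp only [mul_sum]

theorem hasSum_qnumPowSum {ι : Type*} (n : ℕ) (x : ℝ) {G : ι → ℕ → ℂ} {H : ℕ → ℂ}
    (h : ∀ l, HasSum (fun i => G i l) (H l)) :
    HasSum (fun i => qnumPowSum n q x (G i)) (qnumPowSum n q x H) :=
  (hasSum_sum fun l _ => (h l).mul_left _).mul_left _

theorem tendsto_qnumPowSum {α : Type*} {L : Filter α} (n : ℕ) (x : ℝ) {G : α → ℕ → ℂ}
    {H : ℕ → ℂ} (h : ∀ l, Tendsto (fun z => G z l) L (nhds (H l))) :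
    Tendsto (fun z => qnumPowSum n q x (G z)) L (nhds (qnumPowSum n q x H)) :=
  (tendsto_finsetSum _ fun l _ => (h l).const_mul _).const_mul _

theorem norm_neg_mul_pow_lt_one (hq0 : 0 < q) (hq1 : q < 1) {z : ℝ} (hz : |z| < 1) (k : ℕ) :
    ‖-((z : ℂ) * q ^ k)‖ < 1 := by
  rw [norm_neg, norm_mul, norm_pow, Complex.norm_real, Complex.norm_real, Real.norm_eq_abs,
    Real.norm_of_nonneg hq0.le]
  exact lt_of_le_of_lt (mul_le_of_le_one_right (abs_nonneg z) (pow_le_one₀ hq0.le hq1.le)) hz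

theorem hasSum_choose_mul_sum_qnum_pow {ι : Type*} [Fintype ι] (hq0 : 0 < q) (hq1 : q < 1)
    (b : ι → ℂ) (e : ι → ℕ) (f r n : ℕ) {z : ℝ} (hz : |z| < 1) (x : ℝ) :
    HasSum (fun m : ℕ => ((m + r - 1).choose m : ℂ) * (-(z : ℂ)) ^ m *
        ∑ i, b i * (-1 : ℂ) ^ e i * ((qnum q ((e i : ℝ) + x + (m * f : ℕ)) ^ n : ℝ) : ℂ))
      (qnumPowSum n q x fun l =>
        (∑ i, b i * (-(q : ℂ) ^ l) ^ e i) / (1 + z * (q : ℂ) ^ (l * f)) ^ r) := by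
  have key := hasSum_qnumPowSum (q := q) n x fun l =>
    (hasSum_choose_mul_pow (norm_neg_mul_pow_lt_one hq0 hq1 hz (l * f)) r).mul_left
      (∑ i, b i * (-(q : ℂ) ^ l) ^ e i)
  simp only [sub_neg_eq_add, ← div_eq_mul_inv] at key
  refine key.congr_fun fun m => ?_
  have hexp : ∀ i, (e i : ℝ) + x + (m * f : ℕ) = x + (e i + m * f : ℕ) := fun i => by
    push_cast; ring
  simp only [hexp, ofReal_qnum_add_natCast_pow hq0, qnumPowSum_const_mul, sum_qnumPowSum]
  congr 1
  funext l
  rw [mul_sum, sum_mul]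
  refine sum_congr rfl fun i _ => ?_
  rw [pow_add, neg_pow (z : ℂ), neg_pow ((q : ℂ) ^ l), neg_pow ((z : ℂ) * _), mul_pow, ← pow_mul,
    ← pow_mul, ← pow_mul]
  ring

theorem Function.Periodic.hasSum_prod_mul_qnum_pow {f : ℕ} [NeZero f] {c : ℕ → ℂ}
    (hc : Function.Periodic c f) (hq0 : 0 < q) (hq1 : q < 1) {z : ℝ} (hz : |z| < 1) (x : ℝ)
    (n r : ℕ) :
    HasSum (fun m : Fin r → ℕ => (∏ j, c (m j)) * (-1 : ℂ) ^ (∑ j, m j) *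
        (z : ℂ) ^ (∑ j, m j) * ((qnum q (x + (↑(∑ j, m j) : ℝ)) ^ n : ℝ) : ℂ))
      (qnumPowSum n q x fun l => ((∑ a : Fin f, c a * (-((z : ℂ) * q ^ l)) ^ (a : ℕ)) /
        (1 - (-((z : ℂ) * q ^ l)) ^ f)) ^ r) := by
  refine (hasSum_qnumPowSum n x fun l =>
    hc.hasSum_pi_fin_prod_mul_pow (norm_neg_mul_pow_lt_one hq0 hq1 hz l) r).congr_fun fun m => ?_
  rw [ofReal_qnum_add_natCast_pow hq0, qnumPowSum_const_mul]
  congr 1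
  funext l
  rw [prod_mul_distrib, prod_pow_eq_pow_sum, neg_pow ((z : ℂ) * _), mul_pow]
  ring

theorem one_add_ofReal_pow_ne_zero (hq0 : 0 < q) (k : ℕ) : 1 + (q : ℂ) ^ k ≠ 0 := by
  exact_mod_cast (by positivity : (0 : ℝ) < 1 + q ^ k).ne'

theorem tendsto_div_one_add_mul_pow (hq0 : 0 < q) (S : ℂ) (k r : ℕ) :
    Tendsto (fun z : ℝ => S / (1 + z * (q : ℂ) ^ k) ^ r) (nhds 1)
      (nhds (S / (1 + (q : ℂ) ^ k) ^ r)) := by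
  have h : ContinuousAt (fun z : ℝ => S / (1 + z * (q : ℂ) ^ k) ^ r) 1 :=
    continuousAt_const.div (by fun_prop)
      (by simpa using pow_ne_zero r (one_add_ofReal_pow_ne_zero hq0 k))
  simpa using h.tendsto

theorem tendsto_sum_mul_pow_div_pow {f : ℕ} (hf : Odd f) (c : ℕ → ℂ) (hq0 : 0 < q) (l r : ℕ) :
    Tendsto (fun z : ℝ => ((∑ a : Fin f, c a * (-((z : ℂ) * q ^ l)) ^ (a : ℕ)) /
        (1 - (-((z : ℂ) * q ^ l)) ^ f)) ^ r) (nhds 1)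
      (nhds ((∑ a : Fin r → Fin f, (∏ j, c (a j)) * (-(q : ℂ) ^ l) ^ ∑ j, (a j : ℕ)) /
        (1 + (q : ℂ) ^ (l * f)) ^ r)) := by
  have hden : 1 - (-(q : ℂ) ^ l) ^ f = 1 + (q : ℂ) ^ (l * f) := by
    rw [hf.neg_pow, pow_mul, sub_neg_eq_add]
  have h : ContinuousAt (fun z : ℝ => ((∑ a : Fin f, c a * (-((z : ℂ) * q ^ l)) ^ (a : ℕ)) /
      (1 - (-((z : ℂ) * q ^ l)) ^ f)) ^ r) 1 :=
    (ContinuousAt.div (by fun_prop) (by fun_prop)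
      (by simpa [hden] using one_add_ofReal_pow_ne_zero hq0 (l * f))).pow r
  convert h.tendsto using 2
  simp [div_pow, hden, sum_fin_mul_pow_pow]

theorem div_pow_mul_sum_eq_qnumPowSum (n r f : ℕ) (x : ℝ) (S : ℕ → ℂ) :
    (2 : ℂ) ^ r / ((1 : ℂ) - (q : ℂ)) ^ n *
        ∑ l ∈ range (n + 1), (n.choose l : ℂ) * ((q ^ ((l : ℝ) * x) : ℝ) : ℂ) * (-1) ^ l *
          S l / (((1 + q ^ (l * f) : ℝ)) : ℂ) ^ r =
      2 ^ r * qnumPowSum n q x fun l => S l / (1 + (q : ℂ) ^ (l * f)) ^ r := by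
  rw [qnumPowSum, div_eq_mul_inv _ (_ ^ n), inv_pow, mul_assoc]
  push_cast
  congr 2
  exact sum_congr rfl fun _ _ => by ring

end QExpansion

theorem stmt_1_general (f : ℕ) (hfodd : Odd f) (χ : DirichletCharacter ℂ f)
    (n r : ℕ) (q : ℝ) (hq0 : 0 < q) (hq1 : q < 1) (x : ℝ) :
    Tendsto (fun z : ℝ => (2 : ℂ) ^ r *
        ∑' m : ℕ, ((m + r - 1).choose m : ℂ) * (-(z : ℂ)) ^ m *
          ∑ a : Fin r → Fin f, (∏ j, χ ((a j : ℕ) : ZMod f)) *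
            (-1 : ℂ) ^ (∑ j, (a j : ℕ)) *
            ((qnum q ((↑(∑ j, (a j : ℕ)) : ℝ) + x + (m * f : ℕ)) ^ n : ℝ) : ℂ))
      (nhdsWithin 1 (Set.Iio 1))
      (nhds ((2 : ℂ) ^ r / ((1 : ℂ) - (q : ℂ)) ^ n *
        ∑ l ∈ range (n + 1), (n.choose l : ℂ) * ((q ^ ((l : ℝ) * x) : ℝ) : ℂ) * (-1) ^ l *
          (∑ a : Fin r → Fin f, (∏ j, χ ((a j : ℕ) : ZMod f)) *
            (-(q : ℂ) ^ l) ^ (∑ j, (a j : ℕ))) / (((1 + q ^ (l * f) : ℝ)) : ℂ) ^ r)) ∧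
    Tendsto (fun z : ℝ => (2 : ℂ) ^ r *
        ∑' m : Fin r → ℕ, (∏ j, χ ((m j : ℕ) : ZMod f)) * (-1 : ℂ) ^ (∑ j, m j) *
          (z : ℂ) ^ (∑ j, m j) * ((qnum q (x + (↑(∑ j, m j) : ℝ)) ^ n : ℝ) : ℂ))
      (nhdsWithin 1 (Set.Iio 1))
      (nhds ((2 : ℂ) ^ r / ((1 : ℂ) - (q : ℂ)) ^ n *
        ∑ l ∈ range (n + 1), (n.choose l : ℂ) * ((q ^ ((l : ℝ) * x) : ℝ) : ℂ) * (-1) ^ l *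
          (∑ a : Fin r → Fin f, (∏ j, χ ((a j : ℕ) : ZMod f)) *
            (-(q : ℂ) ^ l) ^ (∑ j, (a j : ℕ))) / (((1 + q ^ (l * f) : ℝ)) : ℂ) ^ r)) := by
  have : NeZero f := ⟨hfodd.pos.ne'⟩
  have hχ : Function.Periodic (fun k : ℕ => χ k) f := fun k => by simp
  have hz : ∀ᶠ z in nhdsWithin (1 : ℝ) (Set.Iio 1), |z| < 1 :=
    mem_of_superset (Ioo_mem_nhdsLT (by norm_num : (-1 : ℝ) < 1)) fun _ hz => abs_lt.mpr hz
  rw [div_pow_mul_sum_eq_qnumPowSum]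
  constructor
  · refine ((tendsto_qnumPowSum n x fun l => tendsto_div_one_add_mul_pow hq0 _ (l * f) r)
      |>.mono_left nhdsWithin_le_nhds |>.const_mul _ |>.congr' ?_)
    filter_upwards [hz] with z hz
    exact congrArg _ (hasSum_choose_mul_sum_qnum_pow hq0 hq1
      (fun a : Fin r → Fin f => ∏ j, χ ((a j : ℕ) : ZMod f)) (fun a => ∑ j, (a j : ℕ))
      f r n hz x).tsum_eq.symm
  · refine ((tendsto_qnumPowSum n x fun l =>
        tendsto_sum_mul_pow_div_pow hfodd (fun k : ℕ => χ k) hq0 l r)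
      |>.mono_left nhdsWithin_le_nhds |>.const_mul _ |>.congr' ?_)
    filter_upwards [hz] with z hz
    exact congrArg _ (hχ.hasSum_prod_mul_qnum_pow hq0 hq1 hz x n r).tsum_eq.symm

theorem stmt_1 (f : ℕ) (hf : 0 < f) (hfodd : Odd f) (χ : DirichletCharacter ℂ f)
    (n r : ℕ) (hr : 1 ≤ r) (q : ℝ) (hq0 : 0 < q) (hq1 : q < 1) (x : ℝ) :
    Tendsto (fun z : ℝ => (2 : ℂ) ^ r *
        ∑' m : ℕ, ((m + r - 1).choose m : ℂ) * (-(z : ℂ)) ^ m *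
          ∑ a : Fin r → Fin f, (∏ j, χ ((a j : ℕ) : ZMod f)) *
            (-1 : ℂ) ^ (∑ j, (a j : ℕ)) *
            ((qnum q ((↑(∑ j, (a j : ℕ)) : ℝ) + x + (m * f : ℕ)) ^ n : ℝ) : ℂ))
      (nhdsWithin 1 (Set.Iio 1))
      (nhds ((2 : ℂ) ^ r / ((1 : ℂ) - (q : ℂ)) ^ n *
        ∑ l ∈ range (n + 1), (n.choose l : ℂ) * ((q ^ ((l : ℝ) * x) : ℝ) : ℂ) * (-1) ^ l *
          (∑ a : Fin r → Fin f, (∏ j, χ ((a j : ℕ) : ZMod f)) *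
            (-(q : ℂ) ^ l) ^ (∑ j, (a j : ℕ))) / (((1 + q ^ (l * f) : ℝ)) : ℂ) ^ r)) ∧
    Tendsto (fun z : ℝ => (2 : ℂ) ^ r *
        ∑' m : Fin r → ℕ, (∏ j, χ ((m j : ℕ) : ZMod f)) * (-1 : ℂ) ^ (∑ j, m j) *
          (z : ℂ) ^ (∑ j, m j) * ((qnum q (x + (↑(∑ j, m j) : ℝ)) ^ n : ℝ) : ℂ))
      (nhdsWithin 1 (Set.Iio 1))
      (nhds ((2 : ℂ) ^ r / ((1 : ℂ) - (q : ℂ)) ^ n *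
        ∑ l ∈ range (n + 1), (n.choose l : ℂ) * ((q ^ ((l : ℝ) * x) : ℝ) : ℂ) * (-1) ^ l *
          (∑ a : Fin r → Fin f, (∏ j, χ ((a j : ℕ) : ZMod f)) *
            (-(q : ℂ) ^ l) ^ (∑ j, (a j : ℕ))) / (((1 + q ^ (l * f) : ℝ)) : ℂ) ^ r)) :=
  stmt_1_general f hfodd χ n r q hq0 hq1 x
end

section
/- Let f be an odd positive integer, χ a Dirichlet character modulo f, n ≥ 0 an integer, q real with 0 < q < 1, and x real. Define E_{n,q}(x) = (2/(1-q)^n) Σ_{l=0}^n C(n,l)(-1)^l q^{lx}/(1+q^l) and E_{n,χ,q}(x) = (2/(1-q)^n) Σ_{l=0}^n C(n,l)(-1)^l q^{lx} Σ_{a=0}^{f-1} χ(a)(-1)^a q^{la}/(1+q^{lf}). Then the distribution relation E_{n,χ,q}(x) = [f]_q^n Σ_{a=0}^{f-1} χ(a)(-1)^a E_{n,q^f}((x+a)/f) holds. -/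
/-!
With `Q = q^f` and `y = (x + a)/f` one has `Q^{ly} = q^{lx} q^{la}` and `Q^l = q^{lf}`, while
`[f]_q^n = (1 - q^f)^n / (1 - q)^n` converts the normalisation of `E_{n,q^f}` into `2/(1-q)^n`.
After this termwise identity the relation is an exchange of the sums over `l` and `a`.
-/

open Finset

/-- The `q`-Euler polynomial `E_{n,Q}(y) = (2/(1-Q)^n) Σ_{l=0}^n C(n,l)(-1)^l Q^{ly}/(1+Q^l)`. -/
noncomputable def qEuler (n : ℕ) (Q y : ℝ) : ℝ :=
  2 / (1 - Q) ^ n *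
    ∑ l ∈ range (n + 1), (n.choose l : ℝ) * (-1) ^ l * Q ^ ((l : ℝ) * y) / (1 + Q ^ (l : ℝ))

lemma qnum_natCast (q : ℝ) (f : ℕ) : qnum q f = (1 - q ^ f) / (1 - q) := by
  rw [qnum, Real.rpow_natCast]

lemma pow_rpow_mul_add_div {q : ℝ} (hq : 0 < q) {f : ℕ} (hf : f ≠ 0) (l a : ℕ) (x : ℝ) :
    (q ^ f) ^ ((l : ℝ) * ((x + a) / f)) = q ^ ((l : ℝ) * x) * q ^ (l * a) := by
  have hfR : (f : ℝ) ≠ 0 := Nat.cast_ne_zero.mpr hf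
  rw [← Real.rpow_natCast q f, ← Real.rpow_natCast q (l * a), ← Real.rpow_mul hq.le,
    ← Real.rpow_add hq]
  congr 1
  push_cast
  field_simp

lemma qEuler_pow_add_div {q : ℝ} (hq : 0 < q) {f : ℕ} (hf : f ≠ 0) (n a : ℕ) (x : ℝ) :
    qEuler n (q ^ f) ((x + a) / f) =
      2 / (1 - q ^ f) ^ n * ∑ l ∈ range (n + 1),
        (n.choose l : ℝ) * (-1) ^ l * (q ^ ((l : ℝ) * x) * q ^ (l * a)) / (1 + q ^ (l * f)) := by
  unfold qEuler
  congr 1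
  refine sum_congr rfl fun l _ => ?_
  rw [pow_rpow_mul_add_div hq hf, Real.rpow_natCast, ← pow_mul, mul_comm f l]

lemma qnum_pow_mul_qEuler_pow_add_div {q : ℝ} (hq0 : 0 < q) (hq1 : q < 1) {f : ℕ} (hf : f ≠ 0)
    (n a : ℕ) (x : ℝ) :
    qnum q f ^ n * qEuler n (q ^ f) ((x + a) / f) =
      2 / (1 - q) ^ n * ∑ l ∈ range (n + 1),
        (n.choose l : ℝ) * (-1) ^ l * (q ^ ((l : ℝ) * x) * q ^ (l * a)) / (1 + q ^ (l * f)) := by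
  have hqf : 1 - q ^ f ≠ 0 := (sub_pos.mpr (pow_lt_one₀ hq0.le hq1 hf)).ne'
  have hq : 1 - q ≠ 0 := (sub_pos.mpr hq1).ne'
  rw [qEuler_pow_add_div hq0 hf, qnum_natCast, ← mul_assoc, div_pow]
  congr 1
  field_simp

theorem stmt_2_general (f : ℕ) (hf : 0 < f) (χ : DirichletCharacter ℂ f)
    (n : ℕ) (q : ℝ) (hq0 : 0 < q) (hq1 : q < 1) (x : ℝ) :
    (2 : ℂ) / ((1 : ℂ) - (q : ℂ)) ^ n *
        ∑ l ∈ range (n + 1), (n.choose l : ℂ) * (-1) ^ l * ((q ^ ((l : ℝ) * x) : ℝ) : ℂ) *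
          ∑ a ∈ range f, χ (a : ZMod f) * (-1) ^ a * (q : ℂ) ^ (l * a) /
            (((1 + q ^ (l * f) : ℝ)) : ℂ) =
      ((qnum q f ^ n : ℝ) : ℂ) *
        ∑ a ∈ range f, χ (a : ZMod f) * (-1) ^ a *
          ((qEuler n (q ^ f) ((x + a) / f) : ℝ) : ℂ) := by
  have hterm : ∀ a : ℕ, ((qnum q f ^ n : ℝ) : ℂ) * (χ (a : ZMod f) * (-1) ^ a *
      ((qEuler n (q ^ f) ((x + a) / f) : ℝ) : ℂ)) =
        χ (a : ZMod f) * (-1) ^ a * ((qnum q f ^ n * qEuler n (q ^ f) ((x + a) / f) : ℝ) : ℂ) := by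
    intro a
    push_cast
    ring
  simp only [mul_sum, hterm, qnum_pow_mul_qEuler_pow_add_div hq0 hq1 hf.ne']
  push_cast
  simp only [mul_sum]
  rw [sum_comm]
  refine sum_congr rfl fun a _ => sum_congr rfl fun l _ => ?_
  ring

theorem stmt_2 (f : ℕ) (hf : 0 < f) (hfodd : Odd f) (χ : DirichletCharacter ℂ f)
    (n : ℕ) (q : ℝ) (hq0 : 0 < q) (hq1 : q < 1) (x : ℝ) :
    (2 : ℂ) / ((1 : ℂ) - (q : ℂ)) ^ n *
        ∑ l ∈ range (n + 1), (n.choose l : ℂ) * (-1) ^ l * ((q ^ ((l : ℝ) * x) : ℝ) : ℂ) *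
          ∑ a ∈ range f, χ (a : ZMod f) * (-1) ^ a * (q : ℂ) ^ (l * a) /
            (((1 + q ^ (l * f) : ℝ)) : ℂ) =
      ((qnum q f ^ n : ℝ) : ℂ) *
        ∑ a ∈ range f, χ (a : ZMod f) * (-1) ^ a *
          ((qEuler n (q ^ f) ((x + a) / f) : ℝ) : ℂ) :=
  stmt_2_general f hf χ n q hq0 hq1 x
end

section
/- Let r ≥ 1 be an integer, h an integer with h > r, n ≥ 0 an integer, q real with 0 < q < 1, and x a real number. Then the multiple series 2^r Σ_{(m_1,…,m_r)∈ℕ^r} q^{(h-1)m_1 + (h-2)m_2 + ⋯ + (h-r)m_r} (-1)^{m_1+⋯+m_r} [x + m_1+⋯+m_r]_q^n converges absolutely, and it equals both (2^r/(1-q)^n) Σ_{l=0}^n C(n,l) (-q^x)^l / (-q^{h-r+l}; q)_r and 2^r Σ_{m=0}^∞ C_q(m+r-1, m) (-q^{h-r})^m [x+m]_q^n, where the last single series also converges absolutely. -/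
open Finset

/-- The `q`-factorial `[k]_q! = [1]_q [2]_q ⋯ [k]_q`. -/
noncomputable def qfact (q : ℝ) (k : ℕ) : ℝ := ∏ i ∈ range k, qnum q ((i : ℝ) + 1)

/-- The Gaussian (`q`-)binomial coefficient `C_q(n,k) = [n]_q!/([k]_q!·[n-k]_q!)`. -/
noncomputable def qbinom (q : ℝ) (n k : ℕ) : ℝ := qfact q n / (qfact q k * qfact q (n - k))

/-- The `q`-Pochhammer symbol `(b;q)_r = ∏_{j=0}^{r-1} (1 - b q^j)`. -/
noncomputable def qpoch (b q : ℝ) (r : ℕ) : ℝ := ∏ i ∈ range r, (1 - b * q ^ i)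

/-!
By the binomial theorem, `[x + k]_q^n = (1 - q)^{-n} ∑_l C(n,l) (-q^x)^l (q^l)^k`, so for each `l`
both series reduce to series in `t = -q^{h-r+l}`. The multiple series factors into `r` geometric
series with ratios `-q^{h-1-j+l}` (`j < r`), whose product is `1 / (t; q)_r`. The single series is
`G_{r-1}(t)`, where `G_w(t) = ∑_m C_q(m+w, m) t^m`, and the `q`-binomial theorem
`G_w(t) = 1 / (t; q)_{w+1}` follows by induction on `w` from the `q`-Pascal rule, which gives
`(1 - t) G_{w+1}(t) = G_w(qt)`. As `h > r`, every ratio has absolute value below `1`, which gives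
absolute convergence.
-/

section PiProduct

variable {R : Type*} [NormedCommRing R] {κ : Type*}

theorem summable_norm_prod_pi {r : ℕ} {f : Fin r → κ → R}
    (hf : ∀ j, Summable fun k => ‖f j k‖) :
    Summable fun m : Fin r → κ => ‖∏ j, f j (m j)‖ := by
  induction r with
  | zero => exact Summable.of_finite
  | succ r ih =>
    rw [← (Fin.consEquiv fun _ => κ).summable_iff]
    refine (Summable.mul_norm (hf 0) (ih fun j => hf j.succ)).congr fun p => ?_
    simp [Fin.prod_univ_succ]

theorem hasSum_prod_pi [CompleteSpace R] {r : ℕ} {f : Fin r → κ → R}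
    (hf : ∀ j, Summable fun k => ‖f j k‖) :
    HasSum (fun m : Fin r → κ => ∏ j, f j (m j)) (∏ j, ∑' k, f j k) := by
  induction r with
  | zero => simp
  | succ r ih =>
    rw [← (Fin.consEquiv fun _ => κ).hasSum_iff, Fin.prod_univ_succ]
    have hprod := summable_mul_of_summable_norm (hf 0) (summable_norm_prod_pi fun j => hf j.succ)
    refine ((hf 0).of_norm.hasSum.mul (ih fun j => hf j.succ) hprod).congr_fun fun p => ?_
    simp only [Function.comp_apply, Fin.consEquiv_apply, Fin.prod_univ_succ, Fin.cons_zero,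
      Fin.cons_succ]

end PiProduct

theorem hasSum_prod_pi_geometric {𝕜 : Type*} [NormedField 𝕜] [CompleteSpace 𝕜] {r : ℕ}
    {c : Fin r → 𝕜} (hc : ∀ j, ‖c j‖ < 1) :
    HasSum (fun m : Fin r → ℕ => ∏ j, c j ^ m j) (∏ j, (1 - c j)⁻¹) := by
  have h := hasSum_prod_pi (f := fun j k => c j ^ k) fun j =>
    summable_norm_geometric_of_norm_lt_one (hc j)
  rwa [prod_congr rfl fun j _ => tsum_geometric_of_norm_lt_one (hc j)] at h

section QNumber

variable {q : ℝ}

theorem qnum_add (hq0 : 0 < q) (y z : ℝ) : qnum q (y + z) = qnum q y + q ^ y * qnum q z := by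
  rw [qnum, qnum, qnum, Real.rpow_add hq0]
  ring

theorem qnum_pos (hq0 : 0 < q) (hq1 : q < 1) {y : ℝ} (hy : 0 < y) : 0 < qnum q y :=
  div_pos (sub_pos.2 (Real.rpow_lt_one hq0.le hq1 hy)) (sub_pos.2 hq1)

theorem qnum_lt_inv_one_sub (hq0 : 0 < q) (hq1 : q < 1) (y : ℝ) : qnum q y < (1 - q)⁻¹ := by
  rw [qnum, div_eq_mul_inv]
  exact mul_lt_of_lt_one_left (inv_pos.2 (sub_pos.2 hq1)) (by linarith [Real.rpow_pos_of_pos hq0 y])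

theorem abs_qnum_add_le (hq0 : 0 < q) (hq1 : q < 1) (x : ℝ) {c : ℝ} (hc : 0 ≤ c) :
    |qnum q (x + c)| ≤ (1 + q ^ x) / (1 - q) := by
  have hqc : q ^ c ≤ 1 := Real.rpow_le_one hq0.le hq1.le hc
  have hqx : 0 < q ^ x := Real.rpow_pos_of_pos hq0 x
  have hqxc : 0 < q ^ (x + c) := Real.rpow_pos_of_pos hq0 _
  have hle : q ^ (x + c) ≤ q ^ x := by
    rw [Real.rpow_add hq0]
    exact mul_le_of_le_one_right hqx.le hqc
  rw [qnum, abs_div, abs_of_pos (sub_pos.2 hq1)]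
  gcongr
  exact abs_le.2 ⟨by linarith, by linarith⟩

theorem qnum_add_natCast_pow (hq0 : 0 < q) (x : ℝ) (n k : ℕ) :
    qnum q (x + k) ^ n =
      ((1 - q) ^ n)⁻¹ * ∑ l ∈ range (n + 1), n.choose l * (-(q ^ x)) ^ l * (q ^ l) ^ k := by
  rw [qnum, Real.rpow_add hq0, Real.rpow_natCast, div_pow, div_eq_inv_mul]
  congr 1
  rw [sub_eq_neg_add, add_pow]
  refine sum_congr rfl fun l _ => ?_
  rw [one_pow, mul_one, neg_mul_eq_neg_mul, mul_pow, ← pow_mul, ← pow_mul, mul_comm l k]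
  ring

end QNumber

section QNumberSeries

variable {q : ℝ} {ι : Type*} {f : ι → ℝ}

theorem hasSum_mul_qnum_add_pow (hq0 : 0 < q) {k : ι → ℕ} {S : ℕ → ℝ} (x : ℝ) (n : ℕ)
    (hS : ∀ l ∈ range (n + 1), HasSum (fun i => f i * (q ^ l) ^ k i) (S l)) :
    HasSum (fun i => f i * qnum q (x + k i) ^ n)
      (((1 - q) ^ n)⁻¹ * ∑ l ∈ range (n + 1), n.choose l * (-(q ^ x)) ^ l * S l) := by
  refine ((hasSum_sum fun l hl => (hS l hl).mul_left (n.choose l * (-(q ^ x)) ^ l)).mul_left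
    ((1 - q) ^ n)⁻¹).congr_fun fun i => ?_
  rw [qnum_add_natCast_pow hq0, mul_sum, mul_sum, mul_sum]
  exact sum_congr rfl fun l _ => by ring

theorem summable_abs_mul_qnum_add_pow (hq0 : 0 < q) (hq1 : q < 1) (k : ι → ℕ) (x : ℝ) (n : ℕ)
    (hf : Summable fun i => |f i|) : Summable fun i => |f i * qnum q (x + k i) ^ n| := by
  refine (hf.mul_right (((1 + q ^ x) / (1 - q)) ^ n)).of_nonneg_of_le (fun i => abs_nonneg _)
    fun i => ?_
  rw [abs_mul, abs_pow]
  gcongr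
  exact abs_qnum_add_le hq0 hq1 x (Nat.cast_nonneg _)

end QNumberSeries

theorem zpow_finsetSum {G₀ ι : Type*} [CommGroupWithZero G₀] {q : G₀} (hq : q ≠ 0)
    (s : Finset ι) (a : ι → ℤ) : q ^ (∑ i ∈ s, a i) = ∏ i ∈ s, q ^ a i := by
  classical
  induction s using Finset.induction_on with
  | empty => simp
  | insert i s hi ih => rw [sum_insert hi, prod_insert hi, zpow_add₀ hq, ih]

theorem zpow_sum_mul_neg_one_pow_mul_pow_sum {K ι : Type*} [Field K] [Fintype ι] {q : K}
    (hq : q ≠ 0) (a : ι → ℤ)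
    (m : ι → ℕ) (l : ℕ) :
    q ^ (∑ j, a j * (m j : ℤ)) * (-1) ^ (∑ j, m j) * (q ^ l) ^ (∑ j, m j) =
      ∏ j, (-(q ^ (a j + l))) ^ m j := by
  simp only [zpow_finsetSum hq, ← prod_pow_eq_pow_sum, ← prod_mul_distrib, zpow_mul,
    zpow_add₀ hq, zpow_natCast]
  exact prod_congr rfl fun j _ => by ring

section QPochhammer

variable {q : ℝ}

theorem qpoch_succ (b : ℝ) (r : ℕ) : qpoch b q (r + 1) = (1 - b) * qpoch (b * q) q r := by
  rw [qpoch, qpoch, prod_range_succ', pow_zero, mul_one, mul_comm]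
  exact congrArg _ (prod_congr rfl fun i _ => by ring)

theorem qpoch_neg_zpow (hq : q ≠ 0) (b : ℤ) (r : ℕ) :
    qpoch (-(q ^ b)) q r = ∏ j : Fin r, (1 - -(q ^ (b + (r - 1 - j)))) := by
  rw [qpoch, ← Fin.prod_univ_eq_prod_range]
  refine Fintype.prod_equiv Fin.revPerm _ _ fun j => ?_
  have hrev : (r : ℤ) - 1 - (Fin.revPerm j : ℕ) = j := by
    rw [Fin.revPerm_apply, Fin.val_rev]
    omega
  rw [zpow_add₀ hq, hrev, zpow_natCast]
  ring

end QPochhammer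

section QBinomial

variable {q : ℝ}

theorem qfact_pos (hq0 : 0 < q) (hq1 : q < 1) (k : ℕ) : 0 < qfact q k :=
  prod_pos fun _ _ => qnum_pos hq0 hq1 (by positivity)

theorem qbinom_add_left_eq_prod_div (hq0 : 0 < q) (hq1 : q < 1) (w m : ℕ) :
    qbinom q (m + w) m = (∏ i ∈ range w, qnum q (m + i + 1)) / qfact q w := by
  have hfact : qfact q (m + w) = qfact q m * ∏ i ∈ range w, qnum q (m + i + 1) := by
    simp only [qfact, prod_range_add, Nat.cast_add, add_assoc]
  rw [qbinom, Nat.add_sub_cancel_left, hfact, mul_div_mul_left _ _ (qfact_pos hq0 hq1 m).ne']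

theorem qbinom_add_left_nonneg (hq0 : 0 < q) (hq1 : q < 1) (w m : ℕ) :
    0 ≤ qbinom q (m + w) m := by
  rw [qbinom_add_left_eq_prod_div hq0 hq1]
  exact div_nonneg (prod_nonneg fun _ _ => (qnum_pos hq0 hq1 (by positivity)).le)
    (qfact_pos hq0 hq1 w).le

theorem qbinom_add_left_le (hq0 : 0 < q) (hq1 : q < 1) (w m : ℕ) :
    qbinom q (m + w) m ≤ (1 - q)⁻¹ ^ w / qfact q w := by
  have hprod : ∏ i ∈ range w, qnum q (m + i + 1) ≤ (1 - q)⁻¹ ^ w := by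
    simpa using prod_le_prod (s := range w) (fun _ _ => (qnum_pos hq0 hq1 (by positivity)).le)
      fun i _ => (qnum_lt_inv_one_sub hq0 hq1 (m + i + 1)).le
  rw [qbinom_add_left_eq_prod_div hq0 hq1]
  exact div_le_div_of_nonneg_right hprod (qfact_pos hq0 hq1 w).le

theorem qbinom_add_zero (hq0 : 0 < q) (hq1 : q < 1) (m : ℕ) : qbinom q (m + 0) m = 1 := by
  rw [qbinom_add_left_eq_prod_div hq0 hq1]
  simp [qfact]

theorem qbinom_zero_add (hq0 : 0 < q) (hq1 : q < 1) (w : ℕ) : qbinom q (0 + w) 0 = 1 := by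
  rw [qbinom_add_left_eq_prod_div hq0 hq1, div_eq_one_iff_eq (qfact_pos hq0 hq1 w).ne', qfact]
  simp

theorem qbinom_succ_add_succ (hq0 : 0 < q) (hq1 : q < 1) (w m : ℕ) :
    qbinom q ((m + 1) + (w + 1)) (m + 1) =
      qbinom q (m + (w + 1)) m + q ^ (m + 1) * qbinom q ((m + 1) + w) (m + 1) := by
  simp only [qbinom_add_left_eq_prod_div hq0 hq1]
  set P := ∏ i ∈ range w, qnum q (m + i + 2)
  have hP : ∏ i ∈ range w, qnum q (↑(m + 1) + i + 1) = P :=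
    prod_congr rfl fun i _ => congrArg (qnum q) (by push_cast; ring)
  have hlast : ∏ i ∈ range (w + 1), qnum q (↑(m + 1) + i + 1) = P * qnum q (m + w + 2) := by
    rw [prod_range_succ, hP]
    exact congrArg (P * qnum q ·) (by push_cast; ring)
  have hfirst : ∏ i ∈ range (w + 1), qnum q (m + i + 1) = qnum q (m + 1) * P := by
    rw [prod_range_succ', mul_comm]
    exact congrArg₂ (· * ·) (congrArg (qnum q) (by push_cast; ring))
      (prod_congr rfl fun i _ => congrArg (qnum q) (by push_cast; ring))
  have hsplit : qnum q (m + w + 2) = qnum q (m + 1) + q ^ (m + 1) * qnum q (w + 1) := by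
    have h := qnum_add hq0 (m + 1) (w + 1)
    rwa [show (m + 1 : ℝ) + (w + 1) = m + w + 2 by ring, ← Nat.cast_add_one,
      Real.rpow_natCast, Nat.cast_add_one] at h
  have hfact : qfact q (w + 1) = qfact q w * qnum q (w + 1) := by
    rw [qfact, prod_range_succ, qfact]
  have hqnum := (qnum_pos hq0 hq1 (by positivity : (0 : ℝ) < w + 1)).ne'
  rw [hP, hlast, hfirst, hsplit, hfact]
  field_simp [(qfact_pos hq0 hq1 w).ne', hqnum]

theorem summable_abs_qbinom_mul_pow (hq0 : 0 < q) (hq1 : q < 1) (w : ℕ) {t : ℝ} (ht : |t| < 1) :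
    Summable fun m => |qbinom q (m + w) m * t ^ m| := by
  refine ((summable_geometric_of_lt_one (abs_nonneg t) ht).mul_left
    ((1 - q)⁻¹ ^ w / qfact q w)).of_nonneg_of_le (fun _ => abs_nonneg _) fun m => ?_
  rw [abs_mul, abs_pow, abs_of_nonneg (qbinom_add_left_nonneg hq0 hq1 w m)]
  gcongr
  exact qbinom_add_left_le hq0 hq1 w m

theorem hasSum_qbinom_mul_pow (hq0 : 0 < q) (hq1 : q < 1) (w : ℕ) {t : ℝ} (ht : |t| < 1) :
    HasSum (fun m => qbinom q (m + w) m * t ^ m) (qpoch t q (w + 1))⁻¹ := by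
  induction w generalizing t with
  | zero =>
    simp only [qbinom_add_zero hq0 hq1, one_mul, qpoch, zero_add, prod_range_one, pow_zero,
      mul_one]
    exact hasSum_geometric_of_abs_lt_one ht
  | succ w ih =>
    have htq : |t * q| < 1 := by
      rw [abs_mul, abs_of_pos hq0]
      nlinarith [abs_nonneg t]
    have h1t : 1 - t ≠ 0 := by linarith [le_abs_self t]
    have hA := (summable_abs_qbinom_mul_pow hq0 hq1 (w + 1) ht).of_abs.hasSum
    set A := ∑' m, qbinom q (m + (w + 1)) m * t ^ m
    set B := (qpoch (t * q) q (w + 1))⁻¹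
    have hA_tail := (hasSum_nat_add_iff' 1).2 hA
    have hB_tail := (hasSum_nat_add_iff' 1).2 (ih htq)
    rw [sum_range_one, qbinom_zero_add hq0 hq1, pow_zero, mul_one] at hA_tail hB_tail
    have hA_tail' : HasSum (fun m => qbinom q ((m + 1) + (w + 1)) (m + 1) * t ^ (m + 1))
        (t * A + (B - 1)) :=
      ((hA.mul_left t).add hB_tail).congr_fun fun m => by rw [qbinom_succ_add_succ hq0 hq1]; ring
    have hAB : A - 1 = t * A + (B - 1) := hA_tail.unique hA_tail'
    suffices hval : (qpoch t q (w + 1 + 1))⁻¹ = A by rwa [hval]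
    rw [qpoch_succ, mul_inv, inv_mul_eq_iff_eq_mul₀ h1t]
    linarith

end QBinomial

section TermwiseSeries

variable {q : ℝ} {r : ℕ} {h : ℤ}

theorem norm_neg_zpow_lt_one (hq0 : 0 < q) (hq1 : q < 1) {z : ℤ} (hz : 0 < z) :
    ‖-(q ^ z)‖ < 1 := by
  rw [norm_neg, Real.norm_eq_abs, abs_of_pos (zpow_pos hq0 z)]
  exact zpow_lt_one₀ hq0 hq1 hz

theorem summable_abs_zpow_sum_mul_neg_one_pow_sum (hq0 : 0 < q) (hq1 : q < 1)
    (hh : (r : ℤ) < h) :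
    Summable fun m : Fin r → ℕ =>
      |q ^ (∑ j : Fin r, (h - 1 - (j : ℤ)) * (m j : ℤ)) * (-1 : ℝ) ^ (∑ j, m j)| := by
  refine (summable_norm_prod_pi fun j => summable_norm_geometric_of_norm_lt_one
    (norm_neg_zpow_lt_one hq0 hq1 (z := h - 1 - j + (0 : ℕ)) (by omega))).congr fun m => ?_
  rw [← zpow_sum_mul_neg_one_pow_mul_pow_sum hq0.ne' _ m 0, pow_zero, one_pow, mul_one,
    Real.norm_eq_abs]

theorem hasSum_zpow_sum_mul_neg_one_pow_sum (hq0 : 0 < q) (hq1 : q < 1) (hh : (r : ℤ) < h)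
    (l : ℕ) :
    HasSum (fun m : Fin r → ℕ =>
      q ^ (∑ j : Fin r, (h - 1 - (j : ℤ)) * (m j : ℤ)) * (-1 : ℝ) ^ (∑ j, m j) *
        (q ^ l) ^ (∑ j, m j)) (qpoch (-(q ^ (h - r + l))) q r)⁻¹ := by
  have hpoch : qpoch (-(q ^ (h - r + l))) q r = ∏ j : Fin r, (1 - -(q ^ (h - 1 - j + l))) := by
    rw [qpoch_neg_zpow hq0.ne']
    exact prod_congr rfl fun j _ => by ring_nf
  rw [hpoch, ← prod_inv_distrib]
  exact (hasSum_prod_pi_geometric fun j => norm_neg_zpow_lt_one hq0 hq1 (by omega)).congr_fun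
    fun m => zpow_sum_mul_neg_one_pow_mul_pow_sum hq0.ne' _ m l

theorem abs_neg_zpow_sub_add_lt_one (hq0 : 0 < q) (hq1 : q < 1) (hh : (r : ℤ) < h) (l : ℕ) :
    |-(q ^ (h - r + l))| < 1 :=
  norm_neg_zpow_lt_one hq0 hq1 (by omega)

theorem summable_abs_qbinom_mul_neg_zpow_pow (hq0 : 0 < q) (hq1 : q < 1) (hr : 1 ≤ r)
    (hh : (r : ℤ) < h) :
    Summable fun m : ℕ => |qbinom q (m + r - 1) m * (-(q ^ (h - r))) ^ m| := by
  refine (summable_abs_qbinom_mul_pow hq0 hq1 (r - 1)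
    (abs_neg_zpow_sub_add_lt_one hq0 hq1 hh 0)).congr fun m => ?_
  rw [Nat.add_sub_assoc hr, Nat.cast_zero, add_zero]

theorem hasSum_qbinom_mul_neg_zpow_pow (hq0 : 0 < q) (hq1 : q < 1) (hr : 1 ≤ r)
    (hh : (r : ℤ) < h) (l : ℕ) :
    HasSum (fun m : ℕ => qbinom q (m + r - 1) m * (-(q ^ (h - r))) ^ m * (q ^ l) ^ m)
      (qpoch (-(q ^ (h - r + l))) q r)⁻¹ := by
  have hsum := hasSum_qbinom_mul_pow hq0 hq1 (r - 1) (abs_neg_zpow_sub_add_lt_one hq0 hq1 hh l)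
  rw [Nat.sub_add_cancel hr] at hsum
  refine hsum.congr_fun fun m => ?_
  rw [Nat.add_sub_assoc hr, zpow_add₀ hq0.ne', zpow_natCast]
  ring

end TermwiseSeries

theorem stmt_4 (r : ℕ) (hr : 1 ≤ r) (h : ℤ) (hh : (r : ℤ) < h) (n : ℕ)
    (q : ℝ) (hq0 : 0 < q) (hq1 : q < 1) (x : ℝ) :
    Summable (fun m : Fin r → ℕ =>
      |q ^ (∑ j : Fin r, (h - 1 - (j : ℤ)) * (m j : ℤ)) * (-1 : ℝ) ^ (∑ j, m j) *
        qnum q (x + (↑(∑ j, m j) : ℝ)) ^ n|) ∧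
    ((2 : ℝ) ^ r * ∑' m : Fin r → ℕ,
        q ^ (∑ j : Fin r, (h - 1 - (j : ℤ)) * (m j : ℤ)) * (-1 : ℝ) ^ (∑ j, m j) *
          qnum q (x + (↑(∑ j, m j) : ℝ)) ^ n =
      (2 : ℝ) ^ r / (1 - q) ^ n *
        ∑ l ∈ range (n + 1),
          (n.choose l : ℝ) * (-(q ^ x)) ^ l / qpoch (-(q ^ (h - (r : ℤ) + (l : ℤ)))) q r) ∧
    ((2 : ℝ) ^ r * ∑' m : Fin r → ℕ,
        q ^ (∑ j : Fin r, (h - 1 - (j : ℤ)) * (m j : ℤ)) * (-1 : ℝ) ^ (∑ j, m j) *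
          qnum q (x + (↑(∑ j, m j) : ℝ)) ^ n =
      (2 : ℝ) ^ r * ∑' m : ℕ,
        qbinom q (m + r - 1) m * (-(q ^ (h - (r : ℤ)))) ^ m * qnum q (x + (m : ℝ)) ^ n) ∧
    Summable (fun m : ℕ =>
      |qbinom q (m + r - 1) m * (-(q ^ (h - (r : ℤ)))) ^ m * qnum q (x + (m : ℝ)) ^ n|) := by
  have hmulti := hasSum_mul_qnum_add_pow hq0 (k := fun m : Fin r → ℕ => ∑ j, m j) x n
    fun l _ => hasSum_zpow_sum_mul_neg_one_pow_sum hq0 hq1 hh l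
  have hsingle := hasSum_mul_qnum_add_pow hq0 (k := fun m : ℕ => m) x n
    fun l _ => hasSum_qbinom_mul_neg_zpow_pow hq0 hq1 hr hh l
  refine ⟨summable_abs_mul_qnum_add_pow hq0 hq1 _ x n
      (summable_abs_zpow_sum_mul_neg_one_pow_sum hq0 hq1 hh), ?_,
    by rw [hmulti.tsum_eq, hsingle.tsum_eq],
    summable_abs_mul_qnum_add_pow hq0 hq1 (fun m => m) x n
      (summable_abs_qbinom_mul_neg_zpow_pow hq0 hq1 hr hh)⟩
  rw [hmulti.tsum_eq, mul_sum, mul_sum, mul_sum]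
  exact sum_congr rfl fun l _ => by ring
end

section
/- Let r ≥ 1 and n ≥ 0 be integers, q real with 0 < q < 1, x a real number, and w_1, …, w_r positive real numbers. Then for each real z with 0 ≤ z < 1 the series Σ_{(m_1,…,m_r)∈ℕ^r} (-1)^{m_1+⋯+m_r} z^{m_1+⋯+m_r} [x + w_1 m_1 + ⋯ + w_r m_r]_q^n converges absolutely, and as z → 1⁻, 2^r times its value converges to the Barnes-type multiple q-Euler polynomial E_{n,q}^{(r)}(x|w_1,…,w_r) = (2^r/(1-q)^n) Σ_{l=0}^n C(n,l) (-q^x)^l / ((1+q^{l w_1})⋯(1+q^{l w_r})). -/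
/-!
By the binomial theorem, `[x + Σ wᵢmᵢ]_q^n = (1 - q)^{-n} Σₗ C(n,l) (-q^x)^l q^{l Σ wᵢmᵢ}`, so for
`|z| < 1` each summand of the multiple series splits into `n + 1` products of geometric series
`Σₖ (-z q^{l wᵢ})^k`, all absolutely convergent. Summing them gives the closed form
`(1 - q)^{-n} Σₗ C(n,l) (-q^x)^l / ∏ᵢ (1 + z q^{l wᵢ})`, which is continuous at `z = 1`.
-/

open Finset Filter

theorem qnum_add_pow {q : ℝ} (hq : 0 < q) (x s : ℝ) (n : ℕ) :
    qnum q (x + s) ^ n =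
      ((1 - q) ^ n)⁻¹ * ∑ l ∈ range (n + 1), (n.choose l : ℝ) * (-(q ^ x)) ^ l * (q ^ s) ^ l := by
  rw [qnum, Real.rpow_add hq, div_pow, div_eq_inv_mul, sub_eq_neg_add 1 (q ^ x * q ^ s), add_pow]
  refine congrArg _ (sum_congr rfl fun l _ => ?_)
  ring

theorem neg_mul_rpow_mul_pow {q : ℝ} (hq : 0 ≤ q) (z w : ℝ) (l k : ℕ) :
    (-(z * q ^ ((l : ℝ) * w))) ^ k = (-1) ^ k * z ^ k * (q ^ (w * k)) ^ l := by
  rw [mul_comm (l : ℝ) w, Real.rpow_mul_natCast hq, Real.rpow_mul_natCast hq]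
  ring

theorem prod_neg_mul_rpow_pow {ι : Type*} (s : Finset ι) {q : ℝ} (hq : 0 < q) (z : ℝ) (l : ℕ)
    (w : ι → ℝ) (m : ι → ℕ) :
    ∏ i ∈ s, (-(z * q ^ ((l : ℝ) * w i))) ^ m i =
      (-1) ^ (∑ i ∈ s, m i) * z ^ (∑ i ∈ s, m i) * (q ^ (∑ i ∈ s, w i * m i)) ^ l := by
  simp_rw [neg_mul_rpow_mul_pow hq.le, prod_mul_distrib, prod_pow_eq_pow_sum, prod_pow,
    Real.rpow_sum_of_pos hq]

theorem alternating_qnum_pow_eq_sum {r : ℕ} (n : ℕ) {q : ℝ} (hq : 0 < q) (x z : ℝ)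
    (w : Fin r → ℝ) (m : Fin r → ℕ) :
    (-1 : ℝ) ^ (∑ i, m i) * z ^ (∑ i, m i) * qnum q (x + ∑ i, w i * m i) ^ n =
      ((1 - q) ^ n)⁻¹ * ∑ l ∈ range (n + 1),
        (n.choose l : ℝ) * (-(q ^ x)) ^ l * ∏ i, (-(z * q ^ ((l : ℝ) * w i))) ^ m i := by
  simp_rw [qnum_add_pow hq, prod_neg_mul_rpow_pow _ hq, mul_sum]
  refine sum_congr rfl fun l _ => ?_
  ring

section FinProd

variable {R β : Type*} [NormedCommRing R]

theorem summable_norm_prod_fin_pi {r : ℕ} {f : Fin r → β → R}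
    (hf : ∀ i, Summable fun b => ‖f i b‖) :
    Summable fun m : Fin r → β => ‖∏ i, f i (m i)‖ := by
  induction r with
  | zero => exact .of_finite
  | succ r ih =>
    rw [← (Fin.consEquiv fun _ => β).summable_iff]
    simpa [Function.comp_def, Fin.prod_univ_succ] using (hf 0).mul_norm (ih fun i => hf i.succ)

theorem tsum_prod_fin_pi [CompleteSpace R] {r : ℕ} {f : Fin r → β → R}
    (hf : ∀ i, Summable fun b => ‖f i b‖) :
    ∑' m : Fin r → β, ∏ i, f i (m i) = ∏ i, ∑' b, f i b := by
  induction r with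
  | zero => simp
  | succ r ih =>
    rw [← (Fin.consEquiv fun _ => β).tsum_eq, Fin.prod_univ_succ, ← ih fun i => hf i.succ,
      tsum_mul_tsum_of_summable_norm (hf 0) (summable_norm_prod_fin_pi fun i => hf i.succ)]
    simp [Fin.prod_univ_succ]

end FinProd

theorem norm_neg_mul_rpow_lt_one {q : ℝ} (hq0 : 0 < q) (hq1 : q ≤ 1) {z : ℝ} (hz : |z| < 1)
    {t : ℝ} (ht : 0 ≤ t) : ‖-(z * q ^ t)‖ < 1 := by
  have hqpow : q ^ t ≤ 1 := Real.rpow_le_one hq0.le hq1 ht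
  rw [norm_neg, norm_mul, Real.norm_eq_abs, Real.norm_of_nonneg (by positivity)]
  nlinarith [abs_nonneg z]

theorem summable_norm_finsetSum {ι κ E : Type*} [SeminormedAddCommGroup E] {s : Finset κ}
    {f : κ → ι → E} (hf : ∀ k ∈ s, Summable fun i => ‖f k i‖) :
    Summable fun i => ‖∑ k ∈ s, f k i‖ :=
  .of_nonneg_of_le (fun _ => norm_nonneg _) (fun _ => norm_sum_le _ _) (summable_sum hf)

section Series

variable {r : ℕ} (n : ℕ) {q : ℝ} (x : ℝ) {w : Fin r → ℝ} {z : ℝ}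

theorem summable_norm_pow_neg_mul_rpow (hq0 : 0 < q) (hq1 : q ≤ 1) (hw : ∀ i, 0 ≤ w i)
    (hz : |z| < 1) (l : ℕ) (i : Fin r) :
    Summable fun k : ℕ => ‖(-(z * q ^ ((l : ℝ) * w i))) ^ k‖ := by
  simpa [norm_pow] using summable_geometric_of_lt_one (norm_nonneg _)
    (norm_neg_mul_rpow_lt_one hq0 hq1 hz (mul_nonneg l.cast_nonneg (hw i)))

theorem summable_abs_alternating_qnum_pow (hq0 : 0 < q) (hq1 : q ≤ 1) (hw : ∀ i, 0 ≤ w i)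
    (hz : |z| < 1) :
    Summable fun m : Fin r → ℕ =>
      |(-1 : ℝ) ^ (∑ i, m i) * z ^ (∑ i, m i) * qnum q (x + ∑ i, w i * m i) ^ n| := by
  simp_rw [alternating_qnum_pow_eq_sum n hq0 x z w, ← Real.norm_eq_abs, mul_sum]
  refine summable_norm_finsetSum fun l _ => ?_
  simp only [norm_mul, ← mul_assoc]
  exact (summable_norm_prod_fin_pi (summable_norm_pow_neg_mul_rpow hq0 hq1 hw hz l)).mul_left _

theorem tsum_alternating_qnum_pow (hq0 : 0 < q) (hq1 : q ≤ 1) (hw : ∀ i, 0 ≤ w i)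
    (hz : |z| < 1) :
    ∑' m : Fin r → ℕ, (-1 : ℝ) ^ (∑ i, m i) * z ^ (∑ i, m i) * qnum q (x + ∑ i, w i * m i) ^ n =
      ((1 - q) ^ n)⁻¹ * ∑ l ∈ range (n + 1),
        (n.choose l : ℝ) * (-(q ^ x)) ^ l / ∏ i, (1 + z * q ^ ((l : ℝ) * w i)) := by
  have hfactor := fun l => summable_norm_pow_neg_mul_rpow hq0 hq1 hw hz l
  simp_rw [alternating_qnum_pow_eq_sum n hq0 x z w]
  rw [tsum_mul_left, Summable.tsum_finsetSum
    fun l _ => (summable_norm_prod_fin_pi (hfactor l)).of_norm.mul_left _]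
  refine congrArg _ (sum_congr rfl fun l _ => ?_)
  rw [tsum_mul_left, tsum_prod_fin_pi (hfactor l), div_eq_mul_inv, ← prod_inv_distrib]
  refine congrArg _ (prod_congr rfl fun i _ => ?_)
  rw [tsum_geometric_of_norm_lt_one
    (norm_neg_mul_rpow_lt_one hq0 hq1 hz (mul_nonneg l.cast_nonneg (hw i))), sub_neg_eq_add]

theorem tendsto_tsum_alternating_qnum_pow (hq0 : 0 < q) (hq1 : q ≤ 1) (hw : ∀ i, 0 ≤ w i) :
    Tendsto (fun z : ℝ => ∑' m : Fin r → ℕ,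
        (-1 : ℝ) ^ (∑ i, m i) * z ^ (∑ i, m i) * qnum q (x + ∑ i, w i * m i) ^ n)
      (nhdsWithin 1 (Set.Iio 1))
      (nhds (((1 - q) ^ n)⁻¹ * ∑ l ∈ range (n + 1),
        (n.choose l : ℝ) * (-(q ^ x)) ^ l / ∏ i, (1 + q ^ ((l : ℝ) * w i)))) := by
  have hcont : ContinuousAt (fun z : ℝ => ((1 - q) ^ n)⁻¹ * ∑ l ∈ range (n + 1),
      (n.choose l : ℝ) * (-(q ^ x)) ^ l / ∏ i, (1 + z * q ^ ((l : ℝ) * w i))) 1 := by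
    fun_prop (disch := exact prod_ne_zero_iff.2 fun i _ => by positivity)
  have hseries := (hcont.tendsto.mono_left nhdsWithin_le_nhds).congr' <| by
    filter_upwards [Ioo_mem_nhdsLT (show (-1 : ℝ) < 1 by norm_num)] with z hz
    exact (tsum_alternating_qnum_pow n x hq0 hq1 hw (abs_lt.2 hz)).symm
  simpa only [one_mul] using hseries

end Series

theorem stmt_6_general (r n : ℕ) (q : ℝ) (hq0 : 0 < q) (hq1 : q < 1) (x : ℝ)
    (w : Fin r → ℝ) (hw : ∀ i, 0 < w i) :
    (∀ z : ℝ, 0 ≤ z → z < 1 →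
      Summable (fun m : Fin r → ℕ =>
        |(-1 : ℝ) ^ (∑ i, m i) * z ^ (∑ i, m i) * qnum q (x + ∑ i, w i * m i) ^ n|)) ∧
    Tendsto (fun z : ℝ => (2 : ℝ) ^ r *
        ∑' m : Fin r → ℕ,
          (-1 : ℝ) ^ (∑ i, m i) * z ^ (∑ i, m i) * qnum q (x + ∑ i, w i * m i) ^ n)
      (nhdsWithin 1 (Set.Iio 1))
      (nhds ((2 : ℝ) ^ r / (1 - q) ^ n *
        ∑ l ∈ range (n + 1),
          (n.choose l : ℝ) * (-(q ^ x)) ^ l / ∏ i, (1 + q ^ ((l : ℝ) * w i)))) := by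
  have hw' : ∀ i, 0 ≤ w i := fun i => (hw i).le
  refine ⟨fun z hz0 hz1 => summable_abs_alternating_qnum_pow n x hq0 hq1.le hw'
    (abs_lt.2 ⟨by linarith, hz1⟩), ?_⟩
  convert (tendsto_tsum_alternating_qnum_pow n x hq0 hq1.le hw').const_mul ((2 : ℝ) ^ r) using 2
  rw [div_eq_mul_inv, mul_assoc]

theorem stmt_6 (r n : ℕ) (hr : 1 ≤ r) (q : ℝ) (hq0 : 0 < q) (hq1 : q < 1) (x : ℝ)
    (w : Fin r → ℝ) (hw : ∀ i, 0 < w i) :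
    (∀ z : ℝ, 0 ≤ z → z < 1 →
      Summable (fun m : Fin r → ℕ =>
        |(-1 : ℝ) ^ (∑ i, m i) * z ^ (∑ i, m i) * qnum q (x + ∑ i, w i * m i) ^ n|)) ∧
    Tendsto (fun z : ℝ => (2 : ℝ) ^ r *
        ∑' m : Fin r → ℕ,
          (-1 : ℝ) ^ (∑ i, m i) * z ^ (∑ i, m i) * qnum q (x + ∑ i, w i * m i) ^ n)
      (nhdsWithin 1 (Set.Iio 1))
      (nhds ((2 : ℝ) ^ r / (1 - q) ^ n *
        ∑ l ∈ range (n + 1),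
          (n.choose l : ℝ) * (-(q ^ x)) ^ l / ∏ i, (1 + q ^ ((l : ℝ) * w i)))) :=
  stmt_6_general r n q hq0 hq1 x w hw
end

section
/- Let r ≥ 1 and n ≥ 0 be integers, q real with 0 < q < 1, x a real number, w_1, …, w_r positive real numbers, and a_1, …, a_r positive real numbers. Then the multiple series 2^r Σ_{(m_1,…,m_r)∈ℕ^r} (-1)^{m_1+⋯+m_r} q^{a_1 m_1 + ⋯ + a_r m_r} [x + w_1 m_1 + ⋯ + w_r m_r]_q^n converges absolutely and equals E_{n,q}^{(r)}(x|w_1,…,w_r; a_1,…,a_r) = (2^r/(1-q)^n) Σ_{l=0}^n C(n,l) (-1)^l q^{lx} / ((1+q^{l w_1 + a_1})⋯(1+q^{l w_r + a_r})). -/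
/-!
Expanding `[x + S]_q^n = ((1 - q^(x+S)) / (1 - q))^n` by the binomial theorem, with
`S = ∑ wᵢ mᵢ`, turns each summand into a finite combination of products
`∏ᵢ (-q^(l wᵢ + aᵢ))^mᵢ`. Since `0 < l wᵢ + aᵢ`, every factor is a convergent geometric
series, so the multiple series factors as `∏ᵢ (1 + q^(l wᵢ + aᵢ))⁻¹`; over `ℝ`, summability
is the same as absolute summability.
-/

open Finset

theorem hasSum_pi_prod {β : Type*} {r : ℕ} {f : Fin r → β → ℝ} {s : Fin r → ℝ}
    (hf : ∀ i, HasSum (f i) (s i)) :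
    HasSum (fun m : Fin r → β => ∏ i, f i (m i)) (∏ i, s i) := by
  induction r with
  | zero => simp
  | succ r ih =>
    have htail :
        HasSum (fun m : Fin r → β => ∏ i : Fin r, f i.succ (m i)) (∏ i : Fin r, s i.succ) :=
      ih fun i => hf i.succ
    have hprod := summable_mul_of_summable_norm (hf 0).summable.norm htail.summable.norm
    have hcons := (Fin.consEquiv fun _ => β).symm.hasSum_iff.mpr ((hf 0).mul htail hprod)
    rw [Fin.prod_univ_succ]
    convert hcons using 1
    · -- `HasSum.mul` sums with respect to the additive monoid of the semiring `ℝ`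
      rfl
    · funext m
      simp [Fin.prod_univ_succ, Fin.consEquiv, Fin.tail]

theorem qnum_pow_eq_sum {q : ℝ} (hq : 0 ≤ q) (y : ℝ) (n : ℕ) :
    qnum q y ^ n =
      ∑ l ∈ range (n + 1), (n.choose l : ℝ) * (-1) ^ l * q ^ ((l : ℝ) * y) / (1 - q) ^ n := by
  rw [qnum, div_pow, sub_eq_neg_add, add_pow, sum_div]
  refine sum_congr rfl fun l _ => ?_
  rw [neg_pow, ← Real.rpow_natCast (q ^ y), ← Real.rpow_mul hq, mul_comm y]
  ring

theorem neg_one_pow_sum_mul_rpow_sum {r : ℕ} {q : ℝ} (hq : 0 < q) (t : ℝ) (w a : Fin r → ℝ)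
    (m : Fin r → ℕ) :
    (-1 : ℝ) ^ (∑ i, m i) * q ^ (∑ i, a i * m i) * q ^ (t * ∑ i, w i * m i) =
      ∏ i, (-q ^ (t * w i + a i)) ^ m i := by
  have hfactor (i : Fin r) :
      (-q ^ (t * w i + a i)) ^ m i = (-1) ^ m i * q ^ ((t * w i + a i) * m i) := by
    rw [neg_pow, ← Real.rpow_natCast (q ^ _), ← Real.rpow_mul hq.le]
  rw [prod_congr rfl fun i _ => hfactor i, prod_mul_distrib, prod_pow_eq_pow_sum,
    ← Real.rpow_sum_of_pos hq, mul_assoc, ← Real.rpow_add hq, mul_sum, ← sum_add_distrib]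
  congr 2
  exact sum_congr rfl fun i _ => by ring

theorem stmt_7_general (r n : ℕ) (q : ℝ) (hq0 : 0 < q) (hq1 : q < 1) (x : ℝ)
    (w a : Fin r → ℝ) (hw : ∀ i, 0 < w i) (ha : ∀ i, 0 < a i) :
    Summable (fun m : Fin r → ℕ =>
      |(-1 : ℝ) ^ (∑ i, m i) * q ^ (∑ i, a i * m i) * qnum q (x + ∑ i, w i * m i) ^ n|) ∧
    (2 : ℝ) ^ r * ∑' m : Fin r → ℕ,
        (-1 : ℝ) ^ (∑ i, m i) * q ^ (∑ i, a i * m i) * qnum q (x + ∑ i, w i * m i) ^ n =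
      (2 : ℝ) ^ r / (1 - q) ^ n *
        ∑ l ∈ range (n + 1),
          (n.choose l : ℝ) * (-1) ^ l * q ^ ((l : ℝ) * x) /
            ∏ j, (1 + q ^ ((l : ℝ) * w j + a j)) := by
  set c : ℕ → ℝ := fun l => (n.choose l : ℝ) * (-1) ^ l * q ^ ((l : ℝ) * x) / (1 - q) ^ n
  have hterm (m : Fin r → ℕ) :
      (-1 : ℝ) ^ (∑ i, m i) * q ^ (∑ i, a i * m i) * qnum q (x + ∑ i, w i * m i) ^ n =
        ∑ l ∈ range (n + 1), c l * ∏ i, (-q ^ ((l : ℝ) * w i + a i)) ^ m i := by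
    rw [qnum_pow_eq_sum hq0.le, mul_sum]
    refine sum_congr rfl fun l _ => ?_
    rw [← neg_one_pow_sum_mul_rpow_sum hq0, mul_add, Real.rpow_add hq0]
    ring
  have hratio (l : ℕ) (i : Fin r) : |-q ^ ((l : ℝ) * w i + a i)| < 1 := by
    rw [abs_neg, abs_of_pos (Real.rpow_pos_of_pos hq0 _)]
    exact Real.rpow_lt_one hq0.le hq1 (by positivity [hw i, ha i])
  have hsum : HasSum
      (fun m : Fin r → ℕ =>
        (-1 : ℝ) ^ (∑ i, m i) * q ^ (∑ i, a i * m i) * qnum q (x + ∑ i, w i * m i) ^ n)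
      (∑ l ∈ range (n + 1), c l * ∏ i, (1 - -q ^ ((l : ℝ) * w i + a i))⁻¹) := by
    simp_rw [hterm]
    exact hasSum_sum fun l _ =>
      (hasSum_pi_prod fun i => hasSum_geometric_of_abs_lt_one (hratio l i)).mul_left (c l)
  refine ⟨hsum.summable.abs, ?_⟩
  rw [hsum.tsum_eq, mul_sum, mul_sum]
  refine sum_congr rfl fun l _ => ?_
  simp only [c, sub_neg_eq_add, prod_inv_distrib]
  ring

theorem stmt_7 (r n : ℕ) (hr : 1 ≤ r) (q : ℝ) (hq0 : 0 < q) (hq1 : q < 1) (x : ℝ)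
    (w a : Fin r → ℝ) (hw : ∀ i, 0 < w i) (ha : ∀ i, 0 < a i) :
    Summable (fun m : Fin r → ℕ =>
      |(-1 : ℝ) ^ (∑ i, m i) * q ^ (∑ i, a i * m i) * qnum q (x + ∑ i, w i * m i) ^ n|) ∧
    (2 : ℝ) ^ r * ∑' m : Fin r → ℕ,
        (-1 : ℝ) ^ (∑ i, m i) * q ^ (∑ i, a i * m i) * qnum q (x + ∑ i, w i * m i) ^ n =
      (2 : ℝ) ^ r / (1 - q) ^ n *
        ∑ l ∈ range (n + 1),
          (n.choose l : ℝ) * (-1) ^ l * q ^ ((l : ℝ) * x) /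
            ∏ j, (1 + q ^ ((l : ℝ) * w j + a j)) :=
  stmt_7_general r n q hq0 hq1 x w a hw ha
end

section
/- Let f be an odd positive integer, χ a Dirichlet character modulo f, r ≥ 1 and n ≥ 0 integers, q real with 0 < q < 1, x a real number, w_1, …, w_r positive real numbers, and a_1, …, a_r positive real numbers. Then the multiple series 2^r Σ_{(m_1,…,m_r)∈ℕ^r} (∏_{j=1}^r χ(m_j)) (-1)^{m_1+⋯+m_r} q^{a_1 m_1 + ⋯ + a_r m_r} [x + w_1 m_1 + ⋯ + w_r m_r]_q^n converges absolutely and equals (2^r/(1-q)^n) Σ_{l=0}^n C(n,l)(-1)^l q^{lx} Σ_{(b_1,…,b_r)∈{0,…,f-1}^r} (∏_{i=1}^r χ(b_i)) (-1)^{b_1+⋯+b_r} q^{Σ_{i=1}^r (l w_i + a_i) b_i} / ∏_{j=1}^r (1 + q^{(l w_j + a_j) f}). -/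
/-!
Expanding `[y]_q ^ n = (1 - q)⁻ⁿ ∑ₗ C(n,l) (-1)ˡ q^(l y)` binomially turns each summand into a
finite combination of products `∏ⱼ χ(mⱼ) zⱼ^mⱼ` with `zⱼ = -q^(l wⱼ + aⱼ)`, `|zⱼ| < 1`, so the
multiple series splits into products of absolutely convergent one-variable series. Since `χ` has
period `f`, writing `m = k f + b` gives `∑ₘ χ(m) zᵐ = (∑_{b<f} χ(b) zᵇ) / (1 - zᶠ)`, and `f` odd
makes `1 - zᶠ = 1 + q^((l w + a) f)`.
-/

open Finset

theorem prod_apply_cons {M β : Type*} [CommMonoid M] {r : ℕ} (g : Fin (r + 1) → β → M) (k : β)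
    (m : Fin r → β) :
    ∏ i, g i ((Fin.cons k m : Fin (r + 1) → β) i) = g 0 k * ∏ i, g i.succ (m i) := by
  simp [Fin.prod_univ_succ]

section PiProduct

variable {R β : Type*} [NormedCommRing R]

theorem summable_norm_prod_pi_s8 : ∀ {r : ℕ} (g : Fin r → β → R),
    (∀ i, Summable fun b => ‖g i b‖) → Summable fun m : Fin r → β => ‖∏ i, g i (m i)‖
  | 0, _, _ => .of_finite
  | r + 1, g, hg => by
    rw [← (Fin.consEquiv fun _ => β).summable_iff]
    simpa [Function.comp_def, prod_apply_cons] using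
      (hg 0).mul_norm (summable_norm_prod_pi_s8 (fun i => g i.succ) fun i => hg i.succ)

theorem tsum_prod_pi [CompleteSpace R] : ∀ {r : ℕ} (g : Fin r → β → R),
    (∀ i, Summable fun b => ‖g i b‖) → ∑' m : Fin r → β, ∏ i, g i (m i) = ∏ i, ∑' b, g i b
  | 0, _, _ => by simp
  | r + 1, g, hg => by
    rw [← (Fin.consEquiv fun _ => β).tsum_eq, Fin.prod_univ_succ,
      ← tsum_prod_pi (fun i => g i.succ) fun i => hg i.succ,
      tsum_mul_tsum_of_summable_norm (hg 0) (summable_norm_prod_pi_s8 _ fun i => hg i.succ)]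
    simp [prod_apply_cons]

end PiProduct

theorem summable_norm_mul_pow_of_norm_le {K : Type*} [NormedField K] {ψ : ℕ → K} {C : ℝ}
    (hψ : ∀ m, ‖ψ m‖ ≤ C) {z : K} (hz : ‖z‖ < 1) : Summable fun m => ‖ψ m * z ^ m‖ := by
  refine .of_nonneg_of_le (fun _ => norm_nonneg _) (fun m => ?_)
    ((summable_geometric_of_lt_one (norm_nonneg z) hz).mul_left C)
  rw [norm_mul, norm_pow]
  exact mul_le_mul_of_nonneg_right (hψ m) (pow_nonneg (norm_nonneg z) m)

theorem norm_neg_ofReal_rpow_lt_one {q c : ℝ} (hq0 : 0 < q) (hq1 : q < 1) (hc : 0 < c) :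
    ‖-((q ^ c : ℝ) : ℂ)‖ < 1 := by
  rw [norm_neg, Complex.norm_real, Real.norm_of_nonneg (Real.rpow_nonneg hq0.le c)]
  exact Real.rpow_lt_one hq0.le hq1 hc

theorem hasSum_mul_pow_of_periodic {K : Type*} [NormedField K] {ψ : ℕ → K} {f : ℕ} [NeZero f]
    (hψ : Function.Periodic ψ f) {z : K} (hz : ‖z‖ < 1) :
    HasSum (fun m => ψ m * z ^ m) ((∑ b : Fin f, ψ b * z ^ (b : ℕ)) / (1 - z ^ f)) := by
  set u : ℕ → K := fun k => (z ^ f) ^ k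
  set v : Fin f → K := fun b => ψ b * z ^ (b : ℕ)
  have hzf : ‖z ^ f‖ < 1 := by
    rw [norm_pow]; exact pow_lt_one₀ (norm_nonneg _) hz (NeZero.ne f)
  have hu : HasSum u (1 - z ^ f)⁻¹ := hasSum_geometric_of_norm_lt_one hzf
  have hu_norm : Summable fun k => ‖u k‖ := by
    simpa only [u, norm_pow] using summable_geometric_of_lt_one (norm_nonneg _) hzf
  have huv : HasSum (fun p : ℕ × Fin f => u p.1 * v p.2) ((1 - z ^ f)⁻¹ * ∑ b, v b) :=
    hu.mul (hasSum_fintype v) (summable_mul_of_summable_norm' (f := u) (g := v)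
      hu_norm hu.summable .of_finite .of_finite)
  rw [← (Nat.divModEquiv f).symm.hasSum_iff, div_eq_inv_mul]
  convert huv using 2 with ⟨k, b⟩
  simp only [Function.comp_apply, Nat.divModEquiv_symm_apply, u, v]
  have hψk : ψ (b + k * f) = ψ b := by simpa using hψ.nat_mul k b
  rw [add_comm, hψk, pow_add, mul_comm _ f, pow_mul]
  ring

theorem DirichletCharacter.periodic_natCast {f : ℕ} (χ : DirichletCharacter ℂ f) :
    Function.Periodic (fun m : ℕ => χ m) f := fun m => by simp

theorem DirichletCharacter.summable_norm_mul_pow {f : ℕ} (χ : DirichletCharacter ℂ f) {z : ℂ}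
    (hz : ‖z‖ < 1) : Summable fun m : ℕ => ‖χ m * z ^ m‖ :=
  summable_norm_mul_pow_of_norm_le (fun m => χ.norm_le_one m) hz

theorem hasSum_dirichletCharacter_mul_neg_rpow_pow {f : ℕ} [NeZero f] (hf : Odd f)
    (χ : DirichletCharacter ℂ f) {q c : ℝ} (hq0 : 0 < q) (hq1 : q < 1) (hc : 0 < c) :
    HasSum (fun m : ℕ => χ m * (-((q ^ c : ℝ) : ℂ)) ^ m)
      ((∑ b : Fin f, χ (b : ℕ) * (-((q ^ c : ℝ) : ℂ)) ^ (b : ℕ)) /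
        ((1 + q ^ (c * f) : ℝ) : ℂ)) := by
  have hzf : (-((q ^ c : ℝ) : ℂ)) ^ f = -((q ^ (c * f) : ℝ) : ℂ) := by
    rw [hf.neg_pow, Real.rpow_mul_natCast hq0.le, Complex.ofReal_pow]
  have h := hasSum_mul_pow_of_periodic χ.periodic_natCast (norm_neg_ofReal_rpow_lt_one hq0 hq1 hc)
  rwa [hzf, sub_neg_eq_add, ← Complex.ofReal_one, ← Complex.ofReal_add] at h

theorem prod_mul_neg_rpow_pow {ι : Type*} [Fintype ι] (ψ : ℕ → ℂ) {q : ℝ} (hq : 0 < q)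
    (c : ι → ℝ) (m : ι → ℕ) :
    ∏ j, ψ (m j) * (-((q ^ c j : ℝ) : ℂ)) ^ m j =
      (∏ j, ψ (m j)) * (-1) ^ (∑ j, m j) * ((q ^ (∑ j, c j * m j) : ℝ) : ℂ) := by
  have hsign : ∀ j, ψ (m j) * (-((q ^ c j : ℝ) : ℂ)) ^ m j =
      ψ (m j) * (-1) ^ m j * ((q ^ c j : ℝ) : ℂ) ^ m j := fun j => by ring
  simp only [hsign, prod_mul_distrib, prod_pow_eq_pow_sum, Real.rpow_sum_of_pos hq,
    Complex.ofReal_prod, Real.rpow_mul_natCast hq.le, Complex.ofReal_pow]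

theorem qnum_pow (q y : ℝ) (hq : 0 ≤ q) (n : ℕ) :
    qnum q y ^ n = (∑ l ∈ range (n + 1), (n.choose l : ℝ) * (-1) ^ l * q ^ ((l : ℝ) * y)) /
      (1 - q) ^ n := by
  rw [qnum, div_pow, sub_eq_neg_add, add_pow]
  congr 1
  refine sum_congr rfl fun l _ => ?_
  rw [one_pow, mul_one, neg_pow, mul_comm (l : ℝ), Real.rpow_mul_natCast hq]
  ring

theorem mul_qnum_pow_eq_sum {r : ℕ} (ψ : ℕ → ℂ) {q : ℝ} (hq : 0 < q) (x : ℝ) (w a : Fin r → ℝ)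
    (n : ℕ) (m : Fin r → ℕ) :
    (∏ j, ψ (m j)) * (-1 : ℂ) ^ (∑ j, m j) * ((q ^ (∑ i, a i * m i) : ℝ) : ℂ) *
        ((qnum q (x + ∑ i, w i * m i) ^ n : ℝ) : ℂ) =
      ∑ l ∈ range (n + 1), (n.choose l : ℂ) * (-1) ^ l * ((q ^ ((l : ℝ) * x) : ℝ) : ℂ) /
        (1 - (q : ℂ)) ^ n * ∏ j, ψ (m j) * (-((q ^ ((l : ℝ) * w j + a j) : ℝ) : ℂ)) ^ m j := by
  rw [qnum_pow q _ hq.le]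
  push_cast
  rw [mul_div_assoc', mul_sum, sum_div]
  refine sum_congr rfl fun l _ => ?_
  have hexp : q ^ ((l : ℝ) * (x + ∑ i, w i * m i)) * q ^ (∑ i, a i * (m i : ℝ)) =
      q ^ ((l : ℝ) * x) * q ^ (∑ j, ((l : ℝ) * w j + a j) * m j) := by
    rw [← Real.rpow_add hq, ← Real.rpow_add hq]
    simp only [mul_add, add_mul, mul_sum, sum_add_distrib]
    ring_nf
  rw [prod_mul_neg_rpow_pow ψ hq]
  have hexpC := congrArg (fun t : ℝ => (t : ℂ)) hexp
  push_cast at hexpC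
  linear_combination (∏ j, ψ (m j)) * (-1 : ℂ) ^ (∑ j, m j) * (n.choose l : ℂ) * (-1) ^ l /
    (1 - (q : ℂ)) ^ n * hexpC

theorem summable_norm_prod_dirichletCharacter {f r : ℕ} (χ : DirichletCharacter ℂ f) {q : ℝ}
    (hq0 : 0 < q) (hq1 : q < 1) {c : Fin r → ℝ} (hc : ∀ j, 0 < c j) :
    Summable fun m : Fin r → ℕ => ‖∏ j, χ (m j) * (-((q ^ c j : ℝ) : ℂ)) ^ m j‖ :=
  summable_norm_prod_pi_s8 (fun j (m : ℕ) => χ m * (-((q ^ c j : ℝ) : ℂ)) ^ m) fun j =>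
    χ.summable_norm_mul_pow (norm_neg_ofReal_rpow_lt_one hq0 hq1 (hc j))

theorem tsum_prod_dirichletCharacter {f r : ℕ} [NeZero f] (hf : Odd f)
    (χ : DirichletCharacter ℂ f) {q : ℝ} (hq0 : 0 < q) (hq1 : q < 1) {c : Fin r → ℝ}
    (hc : ∀ j, 0 < c j) :
    ∑' m : Fin r → ℕ, ∏ j, χ (m j) * (-((q ^ c j : ℝ) : ℂ)) ^ m j =
      (∑ b : Fin r → Fin f, (∏ i, χ (b i : ℕ)) * (-1 : ℂ) ^ (∑ i, (b i : ℕ)) *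
          ((q ^ (∑ i, c i * (b i : ℕ)) : ℝ) : ℂ)) / ∏ j, ((1 + q ^ (c j * f) : ℝ) : ℂ) := by
  rw [tsum_prod_pi (fun j (m : ℕ) => χ m * (-((q ^ c j : ℝ) : ℂ)) ^ m) fun j =>
      χ.summable_norm_mul_pow (norm_neg_ofReal_rpow_lt_one hq0 hq1 (hc j)),
    prod_congr rfl fun j _ =>
      (hasSum_dirichletCharacter_mul_neg_rpow_pow hf χ hq0 hq1 (hc j)).tsum_eq,
    prod_div_distrib, prod_univ_sum, Fintype.piFinset_univ]
  congr 1
  exact sum_congr rfl fun b _ => prod_mul_neg_rpow_pow (fun m => χ m) hq0 c fun i => b i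

theorem stmt_8_general (f : ℕ) (hf : 0 < f) (hfodd : Odd f) (χ : DirichletCharacter ℂ f)
    (r n : ℕ) (q : ℝ) (hq0 : 0 < q) (hq1 : q < 1) (x : ℝ)
    (w a : Fin r → ℝ) (hw : ∀ i, 0 < w i) (ha : ∀ i, 0 < a i) :
    Summable (fun m : Fin r → ℕ =>
      ‖(∏ j, χ ((m j : ℕ) : ZMod f)) * (-1 : ℂ) ^ (∑ j, m j) *
        ((q ^ (∑ i, a i * m i) : ℝ) : ℂ) * ((qnum q (x + ∑ i, w i * m i) ^ n : ℝ) : ℂ)‖) ∧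
    (2 : ℂ) ^ r * ∑' m : Fin r → ℕ,
        (∏ j, χ ((m j : ℕ) : ZMod f)) * (-1 : ℂ) ^ (∑ j, m j) *
          ((q ^ (∑ i, a i * m i) : ℝ) : ℂ) * ((qnum q (x + ∑ i, w i * m i) ^ n : ℝ) : ℂ) =
      (2 : ℂ) ^ r / ((1 : ℂ) - (q : ℂ)) ^ n *
        ∑ l ∈ range (n + 1),
          (n.choose l : ℂ) * (-1) ^ l * ((q ^ ((l : ℝ) * x) : ℝ) : ℂ) *
            ∑ b : Fin r → Fin f,
              (∏ i, χ ((b i : ℕ) : ZMod f)) * (-1 : ℂ) ^ (∑ i, (b i : ℕ)) *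
                ((q ^ (∑ i, ((l : ℝ) * w i + a i) * (b i : ℕ)) : ℝ) : ℂ) /
                  ∏ j, (((1 + q ^ (((l : ℝ) * w j + a j) * f) : ℝ)) : ℂ) := by
  have : NeZero f := ⟨hf.ne'⟩
  have hc : ∀ (l : ℕ) j, 0 < (l : ℝ) * w j + a j := fun l j =>
    add_pos_of_nonneg_of_pos (mul_nonneg l.cast_nonneg (hw j).le) (ha j)
  have hexpand := mul_qnum_pow_eq_sum (fun m => χ m) hq0 x w a n
  have hsummable : ∀ l ∈ range (n + 1), Summable fun m : Fin r → ℕ =>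
      ‖(n.choose l : ℂ) * (-1) ^ l * ((q ^ ((l : ℝ) * x) : ℝ) : ℂ) / (1 - (q : ℂ)) ^ n *
        ∏ j, χ (m j) * (-((q ^ ((l : ℝ) * w j + a j) : ℝ) : ℂ)) ^ m j‖ :=
    fun l _ => by
      simpa only [norm_mul] using
        (summable_norm_prod_dirichletCharacter χ hq0 hq1 (hc l)).mul_left _
  refine ⟨?_, ?_⟩
  · refine .of_nonneg_of_le (fun _ => norm_nonneg _) (fun m => ?_) (summable_sum hsummable)
    exact (hexpand m).symm ▸ norm_sum_le _ _
  · rw [tsum_congr hexpand, Summable.tsum_finsetSum fun l hl => (hsummable l hl).of_norm, mul_sum,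
      mul_sum]
    refine sum_congr rfl fun l _ => ?_
    rw [tsum_mul_left, tsum_prod_dirichletCharacter hfodd χ hq0 hq1 (hc l), ← sum_div]
    ring

theorem stmt_8 (f : ℕ) (hf : 0 < f) (hfodd : Odd f) (χ : DirichletCharacter ℂ f)
    (r n : ℕ) (hr : 1 ≤ r) (q : ℝ) (hq0 : 0 < q) (hq1 : q < 1) (x : ℝ)
    (w a : Fin r → ℝ) (hw : ∀ i, 0 < w i) (ha : ∀ i, 0 < a i) :
    Summable (fun m : Fin r → ℕ =>
      ‖(∏ j, χ ((m j : ℕ) : ZMod f)) * (-1 : ℂ) ^ (∑ j, m j) *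
        ((q ^ (∑ i, a i * m i) : ℝ) : ℂ) * ((qnum q (x + ∑ i, w i * m i) ^ n : ℝ) : ℂ)‖) ∧
    (2 : ℂ) ^ r * ∑' m : Fin r → ℕ,
        (∏ j, χ ((m j : ℕ) : ZMod f)) * (-1 : ℂ) ^ (∑ j, m j) *
          ((q ^ (∑ i, a i * m i) : ℝ) : ℂ) * ((qnum q (x + ∑ i, w i * m i) ^ n : ℝ) : ℂ) =
      (2 : ℂ) ^ r / ((1 : ℂ) - (q : ℂ)) ^ n *
        ∑ l ∈ range (n + 1),
          (n.choose l : ℂ) * (-1) ^ l * ((q ^ ((l : ℝ) * x) : ℝ) : ℂ) *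
            ∑ b : Fin r → Fin f,
              (∏ i, χ ((b i : ℕ) : ZMod f)) * (-1 : ℂ) ^ (∑ i, (b i : ℕ)) *
                ((q ^ (∑ i, ((l : ℝ) * w i + a i) * (b i : ℕ)) : ℝ) : ℂ) /
                  ∏ j, (((1 + q ^ (((l : ℝ) * w j + a j) * f) : ℝ)) : ℂ) :=
  stmt_8_general f hf hfodd χ r n q hq0 hq1 x w a hw ha
end
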